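/- arXiv:0712.2006 — 6 statements merged into one kernel-verified Lean document; each statement's English description precedes it below -/
import Mathlib

section
/- Let α ∈ (0,1) and g ∈ C_c^∞(ℝ, ℂ). Then for every t ∈ ℝ the integral defining (V_α g)(t) converges absolutely, the function V_α g is differentiable at every point of ℝ, and W_α g = (V_α g)′ belongs to dom U_α, i.e. ∫_ℝ |(W_α g)(x)|/(1+|x|^{1−α}) dx < ∞. -/
open MeasureTheory

/-- (V_α g)(t) = (1/α)·∫ g(x)·sgn(x−t)·|x−t|^{−α} dx. -/
noncomputable def Valpha (α : ℝ) (g : ℝ → ℂ) (t : ℝ) : ℂ :=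
  (α⁻¹ : ℝ) • ∫ x : ℝ, g x * ((Real.sign (x - t) * |x - t| ^ (-α) : ℝ) : ℂ)

/-- (W_α g) = (V_α g)′. -/
noncomputable def Walpha (α : ℝ) (g : ℝ → ℂ) : ℝ → ℂ :=
  deriv (Valpha α g)

open Set
open scoped ContDiff

noncomputable def Kc (α u : ℝ) : ℂ := ((Real.sign u * |u| ^ (-α) : ℝ) : ℂ)

lemma measurable_realSign : Measurable Real.sign := by
  unfold Real.sign
  exact Measurable.ite measurableSet_Iio measurable_const
    (Measurable.ite measurableSet_Ioi measurable_const measurable_const)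

lemma measurable_Kc (α : ℝ) : Measurable (Kc α) :=
  Complex.measurable_ofReal.comp (measurable_realSign.mul (by fun_prop))

lemma norm_Kc_le (α u : ℝ) : ‖Kc α u‖ ≤ |u| ^ (-α) := by
  have h0 : (0:ℝ) ≤ |u| ^ (-α) := Real.rpow_nonneg (abs_nonneg u) _
  rw [Kc, Complex.norm_real, Real.norm_eq_abs, abs_mul, abs_of_nonneg h0]
  have h1 : |Real.sign u| ≤ 1 := by
    rcases Real.sign_apply_eq u with h | h | h <;> rw [h] <;> norm_num
  calc |Real.sign u| * |u| ^ (-α) ≤ 1 * |u| ^ (-α) := by gcongr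
    _ = |u| ^ (-α) := one_mul _

lemma intervalIntegrable_abs_rpow {r : ℝ} (hr : -1 < r) (a b : ℝ) :
    IntervalIntegrable (fun x : ℝ => |x| ^ r) volume a b := by
  have key : ∀ c : ℝ, 0 ≤ c → IntervalIntegrable (fun x : ℝ => |x| ^ r) volume 0 c := by
    intro c hc
    rw [intervalIntegrable_iff_integrableOn_Ioc_of_le hc]
    refine (((intervalIntegrable_iff_integrableOn_Ioc_of_le hc).mp
      (intervalIntegral.intervalIntegrable_rpow' hr)).congr_fun ?_ measurableSet_Ioc)
    intro x hx; simp only [abs_of_pos hx.1]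
  have key2 : ∀ c : ℝ, IntervalIntegrable (fun x : ℝ => |x| ^ r) volume 0 c := by
    intro c
    rcases le_total 0 c with hc | hc
    · exact key c hc
    · have h := key (-c) (by linarith)
      rw [IntervalIntegrable.iff_comp_neg]
      simpa using h
  exact (key2 a).symm.trans (key2 b)

lemma integrableOn_abs_rpow_sub {r : ℝ} (hr : -1 < r) (t a b : ℝ) :
    IntegrableOn (fun x : ℝ => |x - t| ^ r) (Icc a b) := by
  have h := (intervalIntegrable_abs_rpow hr (a - t) (b - t)).comp_sub_right t
  rw [sub_add_cancel, sub_add_cancel] at h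
  exact ((intervalIntegrable_iff' (h := enorm_ne_top)).mp h).mono_set Icc_subset_uIcc

lemma exists_R {h : ℝ → ℂ} (hhc : HasCompactSupport h) :
    ∃ R : ℝ, 0 ≤ R ∧ tsupport h ⊆ Icc (-R) R := by
  obtain ⟨r, hr⟩ := (Metric.isBounded_iff_subset_closedBall 0).mp hhc.isBounded
  refine ⟨max r 0, le_max_right _ _, fun x hx => ?_⟩
  have h1 := hr hx
  rw [Metric.mem_closedBall, Real.dist_eq, sub_zero] at h1
  have h2 : |x| ≤ max r 0 := h1.trans (le_max_left _ _)
  exact ⟨(abs_le.mp h2).1, (abs_le.mp h2).2⟩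

lemma support_subset_of_tsupport {h : ℝ → ℂ} {s : Set ℝ} (hs : tsupport h ⊆ s) (x : ℝ)
    (hx : x ∉ s) : h x = 0 :=
  image_eq_zero_of_notMem_tsupport fun hmem => hx (hs hmem)

lemma integrable_mul_K {α : ℝ} (hα1 : α < 1) {h : ℝ → ℂ} (hh : Continuous h)
    (hhc : HasCompactSupport h) (t : ℝ) :
    Integrable (fun x : ℝ => h x * Kc α (x - t)) := by
  obtain ⟨C, hC⟩ := hh.bounded_above_of_compact_support hhc
  have hC0 : 0 ≤ C := le_trans (norm_nonneg _) (hC 0)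
  obtain ⟨R, hR0, hRsupp⟩ := exists_R hhc
  have hsupp : Function.support (fun x : ℝ => h x * Kc α (x - t)) ⊆ Icc (-R) R := by
    intro x hx
    by_contra hxmem
    exact hx (by simp only []; rw [support_subset_of_tsupport hRsupp x hxmem, zero_mul])
  rw [← integrableOn_iff_integrable_of_support_subset hsupp]
  refine Integrable.mono' (g := fun x => C * |x - t| ^ (-α))
    ((integrableOn_abs_rpow_sub (by linarith) t (-R) R).const_mul C)
    ((hh.aestronglyMeasurable.mul ((measurable_Kc α).comp
      (measurable_id.sub measurable_const)).aestronglyMeasurable).restrict) ?_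
  refine ae_of_all _ fun x => ?_
  rw [norm_mul]
  exact mul_le_mul (hC x) (norm_Kc_le α (x - t)) (norm_nonneg _) hC0

lemma integrable_mul_K' {α : ℝ} (hα1 : α < 1) {h : ℝ → ℂ} (hh : Continuous h)
    (hhc : HasCompactSupport h) (t : ℝ) :
    Integrable (fun u : ℝ => h (t + u) * Kc α u) := by
  have h2 := (integrable_mul_K hα1 hh hhc t).comp_add_right t
  refine h2.congr (ae_of_all _ fun u => ?_)
  show h (u + t) * Kc α (u + t - t) = h (t + u) * Kc α u
  rw [add_comm u t, add_sub_cancel_left]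

lemma cov (h : ℝ → ℂ) (α t : ℝ) :
    ∫ x : ℝ, h x * Kc α (x - t) = ∫ u : ℝ, h (t + u) * Kc α u := by
  rw [← integral_sub_right_eq_self (fun u : ℝ => h (t + u) * Kc α u) t]
  congr 1; funext x; rw [show t + (x - t) = x from by ring]

lemma integrableOn_abs_rpow_Icc {r : ℝ} (hr : -1 < r) (a b : ℝ) :
    IntegrableOn (fun x : ℝ => |x| ^ r) (Icc a b) :=
  ((intervalIntegrable_iff' (h := enorm_ne_top)).mp (intervalIntegrable_abs_rpow hr a b)).mono_set Icc_subset_uIcc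

lemma key {α : ℝ} (hα0 : 0 < α) (hα1 : α < 1) {h : ℝ → ℂ} (hh : ContDiff ℝ ∞ h)
    (hhc : HasCompactSupport h) (t₀ : ℝ) :
    HasDerivAt (fun t => ∫ u : ℝ, h (t + u) * Kc α u)
      (∫ u : ℝ, deriv h (t₀ + u) * Kc α u) t₀ := by
  have hd : Differentiable ℝ h := hh.differentiable (by simp)
  have hd' : Continuous (deriv h) := hh.continuous_deriv (by exact_mod_cast le_top)
  obtain ⟨C, hC⟩ := hd'.bounded_above_of_compact_support hhc.deriv
  have hC0 : 0 ≤ C := le_trans (norm_nonneg _) (hC 0)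
  obtain ⟨R, hR0, hRsupp⟩ := exists_R hhc
  have hRsupp' : tsupport (deriv h) ⊆ Icc (-R) R :=
    (closure_minimal support_deriv_subset (isClosed_tsupport h)).trans hRsupp
  set M := R + |t₀| + 1 with hM
  have h1 : ∀ᶠ t in nhds t₀, AEStronglyMeasurable (fun u : ℝ => h (t + u) * Kc α u) volume :=
    Filter.Eventually.of_forall fun t =>
      ((hh.continuous.comp (continuous_const.add continuous_id)).aestronglyMeasurable).mul
        (measurable_Kc α).aestronglyMeasurable
  have h2 : Integrable (fun u : ℝ => h (t₀ + u) * Kc α u) :=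
    integrable_mul_K' hα1 hh.continuous hhc t₀
  have h3 : AEStronglyMeasurable (fun u : ℝ => deriv h (t₀ + u) * Kc α u) volume :=
    ((hd'.comp (continuous_const.add continuous_id)).aestronglyMeasurable).mul
      (measurable_Kc α).aestronglyMeasurable
  have h4 : ∀ᵐ u : ℝ ∂volume, ∀ t ∈ Metric.ball t₀ 1,
      ‖deriv h (t + u) * Kc α u‖ ≤ C * (Icc (-M) M).indicator (fun u => |u| ^ (-α)) u := by
    refine ae_of_all _ fun u t ht => ?_
    rw [Metric.mem_ball, Real.dist_eq] at ht
    by_cases hu : u ∈ Icc (-M) M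
    · rw [indicator_of_mem hu, norm_mul]
      exact mul_le_mul (hC _) (norm_Kc_le α u) (norm_nonneg _) hC0
    · have hz : deriv h (t + u) = 0 := by
        refine support_subset_of_tsupport hRsupp' _ fun hmem => hu ?_
        obtain ⟨hm1, hm2⟩ := hmem
        have h5 := abs_le.mp (le_of_lt ht)
        have h6 := le_abs_self t₀
        have h7 := neg_abs_le t₀
        exact ⟨by simp only [hM] at *; linarith, by simp only [hM] at *; linarith⟩
      rw [hz, zero_mul, norm_zero, indicator_of_notMem hu, mul_zero]
  have h5 : Integrable (fun u : ℝ => C * (Icc (-M) M).indicator (fun u => |u| ^ (-α)) u) := by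
    refine Integrable.const_mul ?_ C
    exact (integrable_indicator_iff measurableSet_Icc).mpr
      (integrableOn_abs_rpow_Icc (by linarith) (-M) M)
  have h6 : ∀ᵐ u : ℝ ∂volume, ∀ t ∈ Metric.ball t₀ 1,
      HasDerivAt (fun t => h (t + u) * Kc α u) (deriv h (t + u) * Kc α u) t := by
    refine ae_of_all _ fun u t _ => ?_
    have h8 : HasDerivAt (fun t : ℝ => t + u) 1 t := (hasDerivAt_id t).add_const u
    have hdh : HasDerivAt (fun t => h (t + u)) (deriv h (t + u)) t :=
      HasDerivAt.comp_add_const t u (hd (t + u)).hasDerivAt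
    exact hdh.mul_const _
  exact (hasDerivAt_integral_of_dominated_loc_of_deriv_le (Metric.ball_mem_nhds t₀ zero_lt_one) h1 h2 h3 h4 h5 h6).2

lemma valpha_eq (α : ℝ) (g : ℝ → ℂ) :
    Valpha α g = fun t => (α⁻¹ : ℝ) • ∫ u : ℝ, g (t + u) * Kc α u := by
  funext t
  show (α⁻¹ : ℝ) • ∫ x : ℝ, g x * Kc α (x - t) = _
  rw [cov]

lemma hasDerivAt_V {α : ℝ} (hα0 : 0 < α) (hα1 : α < 1) {g : ℝ → ℂ} (hg : ContDiff ℝ ∞ g)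
    (hgc : HasCompactSupport g) (t : ℝ) :
    HasDerivAt (Valpha α g) ((α⁻¹ : ℝ) • ∫ u : ℝ, deriv g (t + u) * Kc α u) t := by
  rw [valpha_eq]
  exact (key hα0 hα1 hg hgc t).const_smul (α⁻¹ : ℝ)

lemma walpha_eq {α : ℝ} (hα0 : 0 < α) (hα1 : α < 1) {g : ℝ → ℂ} (hg : ContDiff ℝ ∞ g)
    (hgc : HasCompactSupport g) (t : ℝ) :
    Walpha α g t = (α⁻¹ : ℝ) • ∫ u : ℝ, deriv g (t + u) * Kc α u :=
  (hasDerivAt_V hα0 hα1 hg hgc t).deriv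

lemma rpow_diff_le {α : ℝ} (hα0 : 0 < α) {c y z : ℝ} (hc : 0 < c) (hy : c ≤ y) (hz : c ≤ z) :
    |y ^ (-α) - z ^ (-α)| ≤ α * c ^ (-α - 1) * |y - z| := by
  have hder : ∀ x ∈ Ici c, HasDerivWithinAt (fun s : ℝ => s ^ (-α))
      ((-α) * x ^ (-α - 1)) (Ici c) x := fun x hx =>
    (Real.hasDerivAt_rpow_const (Or.inl (ne_of_gt (lt_of_lt_of_le hc hx)))).hasDerivWithinAt
  have hbound : ∀ x ∈ Ici c, ‖(-α) * x ^ (-α - 1)‖ ≤ α * c ^ (-α - 1) := by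
    intro x hx
    have hx0 : 0 < x := lt_of_lt_of_le hc hx
    rw [norm_mul, Real.norm_eq_abs, Real.norm_eq_abs, abs_neg, abs_of_pos hα0,
      abs_of_nonneg (Real.rpow_nonneg hx0.le _)]
    exact mul_le_mul_of_nonneg_left
      (Real.rpow_le_rpow_of_nonpos hc hx (by linarith)) hα0.le
  have := (convex_Ici c).norm_image_sub_le_of_norm_hasDerivWithin_le hder hbound hz hy
  simpa [Real.norm_eq_abs] using this

lemma core {α : ℝ} (hα0 : 0 < α) {h' : ℝ → ℂ} (hm : AEStronglyMeasurable h' volume)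
    (hint : Integrable h') (hint0 : (∫ x : ℝ, h' x) = 0) {R : ℝ} (hR0 : 0 ≤ R)
    (hsupp : ∀ x, x ∉ Icc (-R) R → h' x = 0) {t σ : ℝ} (hσ : σ = 1 ∨ σ = -1)
    (ht : R + 1 ≤ |t|) (hsig : ∀ x ∈ Icc (-R) R, Real.sign (x - t) = σ) :
    ‖∫ x : ℝ, h' x * Kc α (x - t)‖ ≤
      (α * R * ∫ x : ℝ, ‖h' x‖) * (|t| - R) ^ (-α - 1) := by
  set c := |t| - R with hc_def
  have hc : 1 ≤ c := by simp only [hc_def]; linarith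
  have hc0 : 0 < c := lt_of_lt_of_le one_pos hc
  set D := α * c ^ (-α - 1) * R with hD
  have hcpow : 0 ≤ c ^ (-α - 1) := Real.rpow_nonneg hc0.le _
  have hD0 : 0 ≤ D := by positivity
  set B : ℝ → ℝ := fun x => |x - t| ^ (-α) - |t| ^ (-α) with hB
  have hBb : ∀ x ∈ Icc (-R) R, |B x| ≤ D := by
    intro x hx
    obtain ⟨hx1, hx2⟩ := hx
    have habs : |x| ≤ R := abs_le.mpr ⟨hx1, hx2⟩
    have h1 : c ≤ |x - t| := by
      have h1' : |t| - |x| ≤ |x - t| := by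
        have := abs_sub_abs_le_abs_sub t x
        rwa [abs_sub_comm t x] at this
      linarith
    have h2 : c ≤ |t| := by simp only [hc_def]; linarith
    have h3 := rpow_diff_le hα0 hc0 h1 h2
    have h4 : abs (|x - t| - |t|) ≤ R := by
      have h5 := abs_abs_sub_abs_le_abs_sub (x - t) (-t)
      rw [abs_neg] at h5
      have h6 : (x - t) - (-t) = x := by ring
      rw [h6] at h5
      exact h5.trans habs
    calc |B x| ≤ α * c ^ (-α - 1) * abs (|x - t| - |t|) := h3
      _ ≤ α * c ^ (-α - 1) * R := by
          exact mul_le_mul_of_nonneg_left h4 (by positivity)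
      _ = D := rfl
  set ψ : ℝ → ℂ := fun x => h' x * (B x : ℂ) with hψ
  have hψm : AEStronglyMeasurable ψ volume :=
    hm.mul ((Complex.measurable_ofReal.comp (by fun_prop : Measurable B)).aestronglyMeasurable)
  have hψb : ∀ x, ‖ψ x‖ ≤ D * ‖h' x‖ := by
    intro x
    by_cases hx : x ∈ Icc (-R) R
    · rw [hψ]
      simp only []
      rw [norm_mul, Complex.norm_real, Real.norm_eq_abs, mul_comm]
      exact mul_le_mul_of_nonneg_right (hBb x hx) (norm_nonneg _)
    · rw [hψ]; simp only []; rw [hsupp x hx]; simp [hD0]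
  have hψint : Integrable ψ :=
    Integrable.mono' (hint.norm.const_mul D) hψm (ae_of_all _ hψb)
  have hσc : ‖(σ : ℂ)‖ = 1 := by
    rcases hσ with h | h <;> rw [h] <;> simp
  have hptw : ∀ x, h' x * Kc α (x - t) =
      (σ : ℂ) * ψ x + (σ : ℂ) * (h' x * ((|t| ^ (-α) : ℝ) : ℂ)) := by
    intro x
    by_cases hx : x ∈ Icc (-R) R
    · rw [Kc, hsig x hx, hψ]
      simp only [hB]
      push_cast
      ring
    · rw [hsupp x hx, hψ]; simp only []; rw [hsupp x hx]; ring
  calc ‖∫ x : ℝ, h' x * Kc α (x - t)‖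
      = ‖∫ x : ℝ, ((σ : ℂ) * ψ x + (σ : ℂ) * (h' x * ((|t| ^ (-α) : ℝ) : ℂ)))‖ := by
        congr 1; exact integral_congr_ae (ae_of_all _ hptw)
    _ = ‖(σ : ℂ) * ∫ x : ℝ, ψ x‖ := by
        rw [integral_add (hψint.const_mul _) ((hint.mul_const _).const_mul _),
          integral_const_mul, integral_const_mul, integral_mul_const, hint0, zero_mul,
          mul_zero, add_zero]
    _ = ‖∫ x : ℝ, ψ x‖ := by rw [norm_mul, hσc, one_mul]
    _ ≤ ∫ x : ℝ, ‖ψ x‖ := norm_integral_le_integral_norm _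
    _ ≤ ∫ x : ℝ, D * ‖h' x‖ :=
        integral_mono hψint.norm (hint.norm.const_mul D) hψb
    _ = D * ∫ x : ℝ, ‖h' x‖ := integral_const_mul _ _
    _ = (α * R * ∫ x : ℝ, ‖h' x‖) * c ^ (-α - 1) := by rw [hD]; ring

lemma integral_deriv_zero {g : ℝ → ℂ} (hg : ContDiff ℝ ∞ g) (hgc : HasCompactSupport g)
    {R : ℝ} (hR0 : 0 ≤ R) (hsupp : tsupport g ⊆ Icc (-R) R) :
    (∫ x : ℝ, deriv g x) = 0 := by
  have hg' : Continuous (deriv g) := hg.continuous_deriv (by exact_mod_cast le_top)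
  have hint : Integrable (deriv g) := hg'.integrable_of_hasCompactSupport hgc.deriv
  have hRsupp' : tsupport (deriv g) ⊆ Icc (-R) R :=
    (closure_minimal support_deriv_subset (isClosed_tsupport g)).trans hsupp
  have hle : -(R + 1) ≤ R + 1 := by linarith
  rw [← setIntegral_eq_integral_of_forall_compl_eq_zero
      (s := Icc (-(R + 1)) (R + 1)) (fun x hx => support_subset_of_tsupport hRsupp' x
        (fun hmem => hx (Icc_subset_Icc (by linarith) (by linarith) hmem)))]
  rw [integral_Icc_eq_integral_Ioc, ← intervalIntegral.integral_of_le hle]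
  rw [intervalIntegral.integral_deriv_eq_sub
      (fun x _ => (hg.differentiable (by simp)).differentiableAt)
      hint.intervalIntegrable]
  rw [support_subset_of_tsupport hsupp _ (fun hmem => by
        obtain ⟨h1, h2⟩ := hmem; linarith),
      support_subset_of_tsupport hsupp _ (fun hmem => by
        obtain ⟨h1, h2⟩ := hmem; linarith),
      sub_zero]

lemma decay {α : ℝ} (hα0 : 0 < α) (hα1 : α < 1) {g : ℝ → ℂ} (hg : ContDiff ℝ ∞ g)
    (hgc : HasCompactSupport g) {R : ℝ} (hR0 : 0 ≤ R) (hsupp : tsupport g ⊆ Icc (-R) R)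
    (t : ℝ) (ht : R + 1 ≤ |t|) :
    ‖Walpha α g t‖ ≤
      α⁻¹ * ((α * R * ∫ x : ℝ, ‖deriv g x‖) * (|t| - R) ^ (-α - 1)) := by
  have hg' : Continuous (deriv g) := hg.continuous_deriv (by exact_mod_cast le_top)
  have hRsupp' : tsupport (deriv g) ⊆ Icc (-R) R :=
    (closure_minimal support_deriv_subset (isClosed_tsupport g)).trans hsupp
  have hsupp' : ∀ x, x ∉ Icc (-R) R → deriv g x = 0 :=
    support_subset_of_tsupport hRsupp'
  have hint : Integrable (deriv g) := hg'.integrable_of_hasCompactSupport hgc.deriv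
  have hint0 := integral_deriv_zero hg hgc hR0 hsupp
  have hW : Walpha α g t = (α⁻¹ : ℝ) • ∫ x : ℝ, deriv g x * Kc α (x - t) := by
    rw [walpha_eq hα0 hα1 hg hgc t, cov]
  have hcore : ‖∫ x : ℝ, deriv g x * Kc α (x - t)‖ ≤
      (α * R * ∫ x : ℝ, ‖deriv g x‖) * (|t| - R) ^ (-α - 1) := by
    rcases le_or_gt 0 t with htpos | htneg
    · have ht' : R + 1 ≤ t := by rwa [abs_of_nonneg htpos] at ht
      refine core hα0 hg'.aestronglyMeasurable hint hint0 hR0 hsupp' (Or.inr rfl) ht ?_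
      intro x hx
      exact Real.sign_of_neg (by obtain ⟨_, h2⟩ := hx; linarith)
    · have ht' : R + 1 ≤ -t := by rwa [abs_of_neg htneg] at ht
      refine core hα0 hg'.aestronglyMeasurable hint hint0 hR0 hsupp' (Or.inl rfl) ht ?_
      intro x hx
      exact Real.sign_of_pos (by obtain ⟨h1, _⟩ := hx; linarith)
  rw [hW, norm_smul, Real.norm_eq_abs, abs_of_pos (inv_pos.mpr hα0)]
  exact mul_le_mul_of_nonneg_left hcore (by positivity)

lemma integrableOn_abs_rpow_Ioi {r T : ℝ} (hr : r < -1) (hT : 0 < T) :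
    IntegrableOn (fun x : ℝ => |x| ^ r) (Ioi T) :=
  (integrableOn_Ioi_rpow_of_lt hr hT).congr_fun
    (fun x hx => by simp only [abs_of_pos (hT.trans hx)]) measurableSet_Ioi

lemma integrableOn_abs_rpow_Iio {r T : ℝ} (hr : r < -1) (hT : 0 < T) :
    IntegrableOn (fun x : ℝ => |x| ^ r) (Iio (-T)) := by
  have h1 := integrableOn_abs_rpow_Ioi hr hT
  have h2 : (volume.restrict (Ioi T)).map Neg.neg = volume.restrict (Iio (-T)) := by
    conv => rhs; rw [← Measure.map_neg_eq_self (volume : Measure ℝ),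
      measurableEmbedding_neg.restrict_map]
    simp
  rw [IntegrableOn, ← h2, measurableEmbedding_neg.integrable_map_iff]
  have h3 : (fun x : ℝ => |x| ^ r) ∘ Neg.neg = fun x : ℝ => |x| ^ r := by
    funext x; simp
  rw [h3]
  exact h1

/-- For α ∈ (0,1) and g ∈ C_c^∞(ℝ,ℂ), the integral defining (V_α g)(t)
converges absolutely for every t, V_α g is differentiable everywhere, and
W_α g = (V_α g)′ belongs to dom U_α. -/
theorem statement4 (α : ℝ) (hα : α ∈ Set.Ioo (0 : ℝ) 1)
    (g : ℝ → ℂ) (hg : ContDiff ℝ (⊤ : ℕ∞) g) (hgc : HasCompactSupport g) :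
    (∀ t : ℝ, Integrable (fun x : ℝ => g x * ((Real.sign (x - t) * |x - t| ^ (-α) : ℝ) : ℂ))) ∧
    (∀ t : ℝ, DifferentiableAt ℝ (Valpha α g) t) ∧
    Integrable (fun x : ℝ => ‖Walpha α g x‖ / (1 + |x| ^ (1 - α))) := by
  obtain ⟨hα0, hα1⟩ := hα
  replace hg : ContDiff ℝ ∞ g := hg.of_le (by simp)
  refine ⟨fun t => integrable_mul_K hα1 hg.continuous hgc t,
    fun t => (hasDerivAt_V hα0 hα1 hg hgc t).differentiableAt, ?_⟩
  obtain ⟨R, hR0, hsupp⟩ := exists_R hgc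
  set I0 := ∫ x : ℝ, ‖deriv g x‖ with hI0def
  have hI0 : 0 ≤ I0 := integral_nonneg fun x => norm_nonneg _
  set C₂ := α * R * I0 with hC₂def
  have hC₂ : 0 ≤ C₂ := by positivity
  set C₃ := α⁻¹ * C₂ * 2 ^ (α + 1) with hC₃def
  set T := 2 * R + 2 with hTdef
  have hT0 : 0 < T := by simp only [hTdef]; linarith
  set f := fun x : ℝ => ‖Walpha α g x‖ / (1 + |x| ^ (1 - α)) with hfdef
  have hden : ∀ x : ℝ, (0:ℝ) < 1 + |x| ^ (1 - α) := fun x => by positivity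
  have hdom : ∀ x : ℝ, T ≤ |x| → f x ≤ C₃ * |x| ^ (-α - 1) := by
    intro x hx
    have hxpos : 0 < |x| := lt_of_lt_of_le hT0 hx
    have hx2 : 0 < |x| / 2 := by linarith
    have hRT : R + 1 ≤ |x| := by simp only [hTdef] at hx; linarith
    have hstep : (|x| - R) ^ (-α - 1) ≤ |x| ^ (-α - 1) * 2 ^ (α + 1) := by
      calc (|x| - R) ^ (-α - 1) ≤ (|x| / 2) ^ (-α - 1) :=
            Real.rpow_le_rpow_of_nonpos hx2
              (by simp only [hTdef] at hx; linarith) (by linarith)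
        _ = |x| ^ (-α - 1) / 2 ^ (-α - 1) :=
            Real.div_rpow (abs_nonneg x) (by norm_num : (0:ℝ) ≤ 2) _
        _ = |x| ^ (-α - 1) * 2 ^ (α + 1) := by
            rw [show (-α - 1 : ℝ) = -(α + 1) from by ring,
              Real.rpow_neg (by norm_num : (0:ℝ) ≤ 2), div_eq_mul_inv, inv_inv]
    calc f x ≤ ‖Walpha α g x‖ := div_le_self (norm_nonneg _) (by
          have := Real.rpow_nonneg (abs_nonneg x) (1 - α); linarith)
      _ ≤ α⁻¹ * (C₂ * (|x| - R) ^ (-α - 1)) :=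
          decay hα0 hα1 hg hgc hR0 hsupp x hRT
      _ ≤ α⁻¹ * (C₂ * (|x| ^ (-α - 1) * 2 ^ (α + 1))) := by
          refine mul_le_mul_of_nonneg_left (mul_le_mul_of_nonneg_left hstep hC₂) ?_
          positivity
      _ = C₃ * |x| ^ (-α - 1) := by rw [hC₃def]; ring
  have hWd : Differentiable ℝ (Walpha α g) := by
    have hg' : ContDiff ℝ ∞ (deriv g) := (contDiff_infty_iff_deriv.mp hg).2
    have heq : Walpha α g = fun t => (α⁻¹ : ℝ) • ∫ u : ℝ, deriv g (t + u) * Kc α u :=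
      funext (walpha_eq hα0 hα1 hg hgc)
    rw [heq]
    exact fun t => ((key hα0 hα1 hg' hgc.deriv t).const_smul (α⁻¹ : ℝ)).differentiableAt
  have hfc : Continuous f := (hWd.continuous.norm).div
    (continuous_const.add (continuous_abs.rpow_const fun x => Or.inr (by linarith)))
    fun x => (hden x).ne'
  have hfnn : ∀ x, 0 ≤ f x := fun x => div_nonneg (norm_nonneg _) (hden x).le
  have htail : ∀ s : Set ℝ, MeasurableSet s → (∀ x ∈ s, T ≤ |x|) →
      IntegrableOn (fun x : ℝ => |x| ^ (-α - 1)) s → IntegrableOn f s := by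
    intro s hms hs hint
    refine Integrable.mono' (hint.const_mul C₃) hfc.aestronglyMeasurable.restrict ?_
    rw [ae_restrict_iff' hms]
    refine ae_of_all _ fun x hx => ?_
    rw [Real.norm_eq_abs, abs_of_nonneg (hfnn x)]
    exact hdom x (hs x hx)
  have h2 : IntegrableOn f (Ioi T) :=
    htail (Ioi T) measurableSet_Ioi
      (fun x hx => le_trans (le_of_lt hx) (le_abs_self x))
      (integrableOn_abs_rpow_Ioi (by linarith) hT0)
  have h3 : IntegrableOn f (Iio (-T)) :=
    htail (Iio (-T)) measurableSet_Iio
      (fun x hx => by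
        have : -x > T := by simpa using lt_neg_of_lt_neg hx
        calc T ≤ -x := this.le
          _ ≤ |x| := neg_le_abs x)
      (integrableOn_abs_rpow_Iio (by linarith) hT0)
  have h1 : IntegrableOn f (Icc (-T) T) := hfc.integrableOn_Icc
  have hunion : IntegrableOn f (Iio (-T) ∪ (Icc (-T) T ∪ Ioi T)) := h3.union (h1.union h2)
  have huniv : (univ : Set ℝ) ⊆ Iio (-T) ∪ (Icc (-T) T ∪ Ioi T) := by
    intro x _
    rcases lt_or_ge x (-T) with h | h
    · exact Or.inl h
    · rcases le_or_gt x T with h' | h'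
      · exact Or.inr (Or.inl ⟨h, h'⟩)
      · exact Or.inr (Or.inr h')
  exact integrableOn_univ.mp (hunion.mono_set huniv)
end

section
/- Let α ∈ (0,1), β = α+1, and fix a finitizator φ. There exists a constant C > 0, depending only on α and φ, such that for all ε > 0 and all t ∈ ℝ: |F^{[ε]}(t)| ≤ C·min(ε^{−β}, |t|^{−β}). -/
open MeasureTheory

/-- F^{[ε]} = W_α(φ_ε), where φ_ε(x) = ε⁻¹·φ(x/ε). -/
noncomputable def Feps (α : ℝ) (φ : ℝ → ℝ) (ε : ℝ) : ℝ → ℂ :=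
  Walpha α (fun x => ((ε⁻¹ * φ (x / ε) : ℝ) : ℂ))

open Set Metric

namespace St12aux

/-- the kernel -/
noncomputable def k (α : ℝ) (u : ℝ) : ℝ := Real.sign u * |u| ^ (-α)

lemma k_neg (α u : ℝ) : k α (-u) = - k α u := by
  simp [k, Real.sign_neg, abs_neg, neg_mul]

lemma abs_k_le (α u : ℝ) : |k α u| ≤ |u| ^ (-α) := by
  rw [k, abs_mul, abs_of_nonneg (Real.rpow_nonneg (abs_nonneg u) _)]
  have h1 : |Real.sign u| ≤ 1 := by
    rcases Real.sign_apply_eq u with h | h | h <;> rw [h] <;> norm_num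
  calc |Real.sign u| * |u| ^ (-α) ≤ 1 * |u| ^ (-α) :=
        mul_le_mul_of_nonneg_right h1 (Real.rpow_nonneg (abs_nonneg u) _)
    _ = |u| ^ (-α) := one_mul _

lemma measurable_k (α : ℝ) : Measurable (k α) := by
  have h1 : Measurable (Real.sign) := by
    unfold Real.sign
    exact Measurable.ite measurableSet_Iio measurable_const
      (Measurable.ite measurableSet_Ioi measurable_const measurable_const)
  have h2 : Measurable (fun u : ℝ => |u| ^ (-α)) := by
    apply measurable_of_continuousOn_compl_singleton (0 : ℝ)
    apply continuousOn_of_forall_continuousAt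
    intro x hx
    exact (Real.continuousAt_rpow_const _ _ (Or.inl (abs_ne_zero.2 hx))).comp
      continuous_abs.continuousAt
  exact h1.mul h2


variable {α : ℝ}

lemma intInt_abs_rpow (hα : α ∈ Set.Ioo (0:ℝ) 1) (a b : ℝ) :
    IntervalIntegrable (fun x : ℝ => |x| ^ (-α)) volume a b := by
  have key : ∀ c : ℝ, 0 ≤ c → IntervalIntegrable (fun x : ℝ => |x| ^ (-α)) volume 0 c := by
    intro c hc
    rw [intervalIntegrable_iff, uIoc_of_le hc]
    have h := intervalIntegral.intervalIntegrable_rpow' (r := -α)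
      (by linarith [hα.2]) (a := 0) (b := c)
    rw [intervalIntegrable_iff, uIoc_of_le hc] at h
    exact h.congr_fun (fun x hx => by rw [abs_of_pos hx.1]) measurableSet_Ioc
  have keyall : ∀ c : ℝ, IntervalIntegrable (fun x : ℝ => |x| ^ (-α)) volume 0 c := by
    intro c
    rcases le_total 0 c with hc | hc
    · exact key c hc
    · have h2 := key (-c) (by linarith)
      rw [IntervalIntegrable.iff_comp_neg] at h2
      simpa using h2
  exact (keyall a).symm.trans (keyall b)


lemma intInt_abs_rpow_shift (hα : α ∈ Set.Ioo (0:ℝ) 1) (t a b : ℝ) :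
    IntervalIntegrable (fun x : ℝ => |x - t| ^ (-α)) volume a b := by
  have h := (intInt_abs_rpow hα (a - t) (b - t)).comp_sub_right t
  simpa using h

lemma integrableOn_abs_rpow_shift (hα : α ∈ Set.Ioo (0:ℝ) 1) (t a b : ℝ) (hab : a ≤ b) :
    IntegrableOn (fun x : ℝ => |x - t| ^ (-α)) (Icc a b) := by
  rw [← intervalIntegrable_iff_integrableOn_Icc_of_le hab]
  exact intInt_abs_rpow_shift hα t a b

/-- value of the singular integral over a symmetric interval around t -/
lemma integral_abs_rpow_shift (hα : α ∈ Set.Ioo (0:ℝ) 1) (t ε : ℝ) (hε : 0 < ε) :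
    ∫ x in Icc (t - ε) (t + ε), |x - t| ^ (-α) = 2 * ε ^ (1 - α) / (1 - α) := by
  rw [integral_Icc_eq_integral_Ioc,
    ← intervalIntegral.integral_of_le (by linarith : t - ε ≤ t + ε)]
  rw [intervalIntegral.integral_comp_sub_right (fun u => |u| ^ (-α)) t]
  have hsplit : (∫ u in (t - ε - t)..(t + ε - t), |u| ^ (-α)) = ∫ u in (-ε)..ε, |u| ^ (-α) := by
    norm_num
  rw [hsplit]
  have hadd : (∫ u in (-ε)..(0:ℝ), |u| ^ (-α)) + (∫ u in (0:ℝ)..ε, |u| ^ (-α))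
      = ∫ u in (-ε)..ε, |u| ^ (-α) :=
    intervalIntegral.integral_add_adjacent_intervals (intInt_abs_rpow hα _ _)
      (intInt_abs_rpow hα _ _)
  have hneg : (∫ u in (-ε)..(0:ℝ), |u| ^ (-α)) = ∫ u in (0:ℝ)..ε, |u| ^ (-α) := by
    have := intervalIntegral.integral_comp_neg (a := (0:ℝ)) (b := ε) (fun u : ℝ => |u| ^ (-α))
    simpa [abs_neg] using this.symm
  have hval : (∫ u in (0:ℝ)..ε, |u| ^ (-α)) = ε ^ (1 - α) / (1 - α) := by
    have hcongr : (∫ u in (0:ℝ)..ε, |u| ^ (-α)) = ∫ u in (0:ℝ)..ε, u ^ (-α) := by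
      apply intervalIntegral.integral_congr
      intro x hx
      rw [uIcc_of_le hε.le] at hx
      show |x| ^ (-α) = x ^ (-α)
      rw [abs_of_nonneg hx.1]
    rw [hcongr, integral_rpow (Or.inl (by linarith [hα.2]))]
    rw [Real.zero_rpow (by linarith [hα.2] : -α + 1 ≠ 0)]
    ring_nf
  rw [← hadd, hneg, hval]
  ring


/-- derivative control of the kernel away from 0 (positive t case) -/
lemma k_sub_bound_pos (hα : α ∈ Set.Ioo (0:ℝ) 1) {ε t x : ℝ} (hε : 0 < ε)
    (ht : ε ≤ t) (hx : |x| ≤ ε / 2) :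
    |k α (x - t) - k α (-t)| ≤ α * (t / 2) ^ (-(α + 1)) * |x| := by
  have hT : 0 < t := lt_of_lt_of_le hε ht
  set s : Set ℝ := Iic (-(t / 2)) with hs
  have hders : ∀ u ∈ s, HasDerivWithinAt (k α) (-(α * (-u) ^ (-α - 1))) s u := by
    intro u hu
    have hu0 : u < 0 := by
      have : u ≤ -(t / 2) := hu
      linarith
    have hneg : (0:ℝ) < -u := by linarith
    have h1 : HasDerivAt (fun y : ℝ => y ^ (-α)) (-α * (-u) ^ (-α - 1)) (-u) :=
      Real.hasDerivAt_rpow_const (Or.inl hneg.ne')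
    have h2 : HasDerivAt (fun y : ℝ => -y) (-1 : ℝ) u := (hasDerivAt_id u).neg
    have h3 : HasDerivAt (fun y : ℝ => (-y) ^ (-α)) ((-α * (-u) ^ (-α - 1)) * (-1)) u :=
      HasDerivAt.comp u h1 h2
    have h4 : HasDerivAt (fun y : ℝ => -((-y) ^ (-α))) (-(α * (-u) ^ (-α - 1))) u := by
      have := h3.neg
      exact this.congr_deriv (by ring)
    refine h4.hasDerivWithinAt.congr ?_ ?_
    · intro y hy
      have hy0 : y < 0 := by
        have : y ≤ -(t / 2) := hy
        linarith
      rw [k, Real.sign_of_neg hy0, abs_of_neg hy0]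
      ring
    · rw [k, Real.sign_of_neg hu0, abs_of_neg hu0]
      ring
  have hbound : ∀ u ∈ s, ‖-(α * (-u) ^ (-α - 1))‖ ≤ α * (t / 2) ^ (-(α + 1)) := by
    intro u hu
    have hu2 : t / 2 ≤ -u := by
      have : u ≤ -(t / 2) := hu
      linarith
    have hrp : (-u) ^ (-α - 1) ≤ (t / 2) ^ (-α - 1) :=
      Real.rpow_le_rpow_of_nonpos (half_pos hT) hu2 (by linarith [hα.1])
    have h0 : (0:ℝ) ≤ α * (-u) ^ (-α - 1) := by
      have h5 : (0:ℝ) < -u := by linarith [half_pos hT]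
      exact mul_nonneg hα.1.le (Real.rpow_nonneg h5.le _)
    rw [norm_neg, Real.norm_eq_abs, abs_of_nonneg h0]
    have : -(α + 1) = -α - 1 := by ring
    rw [this]
    exact mul_le_mul_of_nonneg_left hrp hα.1.le
  have hxt : x - t ∈ s := by
    have : x ≤ ε / 2 := (abs_le.1 hx).2
    simp only [hs, mem_Iic]
    linarith
  have hnt : -t ∈ s := by
    simp only [hs, mem_Iic]
    linarith
  have := (convex_Iic (-(t / 2))).norm_image_sub_le_of_norm_hasDerivWithin_le
    hders hbound hnt hxt
  calc |k α (x - t) - k α (-t)| = ‖k α (x - t) - k α (-t)‖ := (Real.norm_eq_abs _).symm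
    _ ≤ α * (t / 2) ^ (-(α + 1)) * ‖x - t - -t‖ := this
    _ = α * (t / 2) ^ (-(α + 1)) * |x| := by
        rw [Real.norm_eq_abs]
        ring_nf
    
/-- derivative control of the kernel away from 0 -/
lemma k_sub_bound (hα : α ∈ Set.Ioo (0:ℝ) 1) {ε t x : ℝ} (hε : 0 < ε)
    (ht : ε ≤ |t|) (hx : |x| ≤ ε / 2) :
    |k α (x - t) - k α (-t)| ≤ α * (|t| / 2) ^ (-(α + 1)) * |x| := by
  rcases le_or_gt 0 t with h0 | h0
  · rw [abs_of_nonneg h0] at ht ⊢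
    exact k_sub_bound_pos hα hε ht hx
  · rw [abs_of_neg h0] at ht ⊢
    have hx' : |(-x)| ≤ ε / 2 := by rwa [abs_neg]
    have key := k_sub_bound_pos hα hε ht hx'
    have h1 : k α (x - t) = - k α ((-x) - (-t)) := by
      rw [show (-x) - (-t) = -(x - t) by ring, k_neg]
      ring
    have h2 : k α (-t) = - k α (-(-t)) := by
      rw [k_neg]
      simp
    rw [h1, h2]
    rw [show -k α (-x - -t) - - k α (-(-t)) = -(k α (-x - -t) - k α (-(-t))) by ring, abs_neg]
    rwa [abs_neg] at key


lemma exists_bound {f : ℝ → ℝ} (h : Continuous f) (hc : HasCompactSupport f) :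
    ∃ M : ℝ, 0 < M ∧ ∀ x, |f x| ≤ M := by
  obtain ⟨x₁, hx₁⟩ := (h.abs).exists_forall_ge_of_hasCompactSupport hc.abs
  exact ⟨|f x₁| + 1, by positivity, fun x => by linarith [hx₁ x, abs_nonneg (f x₁)]⟩

lemma key_deriv (hα : α ∈ Set.Ioo (0:ℝ) 1) {g : ℝ → ℝ} (hg : ContDiff ℝ (⊤ : ℕ∞) g)
    (hgc : HasCompactSupport g) (t : ℝ) :
    Integrable (fun x : ℝ => ((deriv g x : ℝ) : ℂ) * ((k α (x - t) : ℝ) : ℂ)) ∧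
    HasDerivAt (Valpha α (fun x => (g x : ℂ)))
      ((α⁻¹ : ℝ) • ∫ x : ℝ, ((deriv g x : ℝ) : ℂ) * ((k α (x - t) : ℝ) : ℂ)) t := by
  obtain ⟨R₁, hR₁⟩ := hgc.isBounded.subset_closedBall 0
  have hR₀ : tsupport g ⊆ closedBall 0 (max R₁ 0) :=
    hR₁.trans (closedBall_subset_closedBall (le_max_left _ _))
  set R₀ : ℝ := max R₁ 0 with hR₀def
  have hR₀0 : 0 ≤ R₀ := le_max_right _ _
  obtain ⟨M, hM0, hM⟩ := exists_bound hg.continuous hgc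
  obtain ⟨M', hM'0, hM'⟩ := exists_bound (hg.continuous_deriv (by simp)) hgc.deriv
  set R : ℝ := R₀ + |t| + 1 with hRdef
  have hR0 : (0:ℝ) ≤ R := by
    have := abs_nonneg t
    linarith
  set bound : ℝ → ℝ := (closedBall (0:ℝ) R).indicator (fun u => (M + M') * |u| ^ (-α))
    with hbdef
  have hbound_nonneg : ∀ u, 0 ≤ bound u := by
    intro u
    rw [hbdef]
    apply indicator_nonneg
    intro u _
    have := Real.rpow_nonneg (abs_nonneg u) (-α)
    positivity
  have hbound_int : Integrable bound := by
    rw [hbdef, integrable_indicator_iff measurableSet_closedBall]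
    have h1 := (intInt_abs_rpow hα (0 - R) (0 + R)).const_mul (M + M')
    rw [intervalIntegrable_iff_integrableOn_Icc_of_le (by linarith)] at h1
    rwa [Real.closedBall_eq_Icc]
  have hFmeas : ∀ (h : ℝ → ℝ), Continuous h → ∀ s : ℝ,
      AEStronglyMeasurable (fun u : ℝ => ((h (u + s) : ℝ) : ℂ) * ((k α u : ℝ) : ℂ)) volume :=
    fun h hh s =>
      ((Complex.measurable_ofReal.comp
        (hh.measurable.comp (measurable_add_const s))).mul
        (Complex.measurable_ofReal.comp (measurable_k α))).aestronglyMeasurable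
  -- vanishing far away
  have hvanish : ∀ s ∈ ball t 1, ∀ u : ℝ, u ∉ closedBall (0:ℝ) R →
      g (u + s) = 0 ∧ deriv g (u + s) = 0 := by
    intro s hs u hu
    have h1 : R < |u| := by
      simp only [mem_closedBall, Real.dist_eq, sub_zero, not_le] at hu
      exact hu
    have h2 : |s| < |t| + 1 := by
      have hd : |s - t| < 1 := by
        simpa [Real.dist_eq] using mem_ball.1 hs
      calc |s| = |s - t + t| := by ring_nf
        _ ≤ |s - t| + |t| := abs_add_le _ _
        _ < |t| + 1 := by linarith
    have h3' : |u| ≤ |u + s| + |s| := by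
      have := abs_add_le (u + s) (-s)
      simpa using this
    have h3 : R₀ < |u + s| := by
      rw [hRdef] at h1
      linarith
    have h4 : u + s ∉ tsupport g := by
      intro hmem
      have := hR₀ hmem
      simp only [mem_closedBall, Real.dist_eq, sub_zero] at this
      linarith
    refine ⟨image_eq_zero_of_notMem_tsupport h4, ?_⟩
    have h5 : u + s ∉ Function.support (deriv g) := fun hs' => h4 (support_deriv_subset hs')
    simpa using Function.notMem_support.1 h5
  -- the dominated differentiation
  have main := hasDerivAt_integral_of_dominated_loc_of_deriv_le (μ := volume) (𝕜 := ℝ)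
    (F := fun s u => ((g (u + s) : ℝ) : ℂ) * ((k α u : ℝ) : ℂ))
    (F' := fun s u => ((deriv g (u + s) : ℝ) : ℂ) * ((k α u : ℝ) : ℂ))
    (x₀ := t) (bound := bound) (s := ball t 1) (ball_mem_nhds t one_pos)
    (Filter.Eventually.of_forall fun s => hFmeas g hg.continuous s)
    (by
      -- integrability of F t
      refine Integrable.mono' hbound_int (hFmeas g hg.continuous t)
        (Filter.Eventually.of_forall fun u => ?_)
      by_cases hu : u ∈ closedBall (0:ℝ) R
      · rw [hbdef, indicator_of_mem hu]
        rw [norm_mul, Complex.norm_real, Complex.norm_real, Real.norm_eq_abs,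
          Real.norm_eq_abs]
        have h6 := mul_le_mul (hM (u + t)) (abs_k_le α u) (abs_nonneg _)
          (by linarith : (0:ℝ) ≤ M)
        refine h6.trans ?_
        have := Real.rpow_nonneg (abs_nonneg u) (-α)
        nlinarith
      · have h7 := (hvanish t (mem_ball_self one_pos) u hu).1
        simp only [h7]
        simpa using hbound_nonneg u)
    (hFmeas (deriv g) (hg.continuous_deriv (by simp)) t)
    (Filter.Eventually.of_forall fun u => by
      intro s hs
      by_cases hu : u ∈ closedBall (0:ℝ) R
      · rw [hbdef, indicator_of_mem hu]
        rw [norm_mul, Complex.norm_real, Complex.norm_real, Real.norm_eq_abs,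
          Real.norm_eq_abs]
        have h6 := mul_le_mul (hM' (u + s)) (abs_k_le α u) (abs_nonneg _)
          (by linarith : (0:ℝ) ≤ M')
        refine h6.trans ?_
        have := Real.rpow_nonneg (abs_nonneg u) (-α)
        nlinarith
      · have h7 := (hvanish s hs u hu).2
        simp only [h7]
        simpa using hbound_nonneg u)
    hbound_int
    (Filter.Eventually.of_forall fun u => by
      intro s _
      have h1 : HasDerivAt (fun y : ℝ => g (u + y)) (deriv g (u + s)) s :=
        HasDerivAt.comp_const_add u s ((hg.differentiable (by simp) (u + s)).hasDerivAt)
      exact (h1.ofReal_comp).mul_const _)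
  -- shift identity
  have hshift : ∀ (h : ℝ → ℝ) (s : ℝ),
      (∫ u : ℝ, ((h (u + s) : ℝ) : ℂ) * ((k α u : ℝ) : ℂ))
        = ∫ x : ℝ, ((h x : ℝ) : ℂ) * ((k α (x - s) : ℝ) : ℂ) := by
    intro h s
    have := integral_add_right_eq_self (μ := volume)
      (fun x => ((h x : ℝ) : ℂ) * ((k α (x - s) : ℝ) : ℂ)) s
    simpa [add_sub_cancel_right] using this
  constructor
  · have h1 := main.1
    have h2 : (fun x : ℝ => ((deriv g x : ℝ) : ℂ) * ((k α (x - t) : ℝ) : ℂ))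
        = fun x => (fun u : ℝ => ((deriv g (u + t) : ℝ) : ℂ) * ((k α u : ℝ) : ℂ)) (x + -t) := by
      funext x
      norm_num [sub_eq_add_neg]
    rw [h2]
    exact h1.comp_add_right (-t)
  · have hV : Valpha α (fun x => (g x : ℂ))
        = fun s => (α⁻¹ : ℝ) • ∫ u : ℝ, ((g (u + s) : ℝ) : ℂ) * ((k α u : ℝ) : ℂ) := by
      funext s
      rw [Valpha]
      congr 1
      exact (hshift g s).symm
    rw [hV, ← hshift (deriv g) t]
    exact main.2.const_smul (α⁻¹ : ℝ)


lemma integral_deriv_zero {g : ℝ → ℝ} (hg : ContDiff ℝ (⊤ : ℕ∞) g) (hgc : HasCompactSupport g) :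
    ∫ x : ℝ, deriv g x = 0 := by
  have hint : Integrable (deriv g) :=
    (hg.continuous_deriv (by simp)).integrable_of_hasCompactSupport hgc.deriv
  have h1 := hgc.integral_Iic_deriv_eq (hg.of_le (by simp)) 0
  have h2 := hgc.integral_Ioi_deriv_eq (hg.of_le (by simp)) 0
  rw [← intervalIntegral.integral_Iic_add_Ioi (b := (0:ℝ)) hint.integrableOn hint.integrableOn, h1, h2]
  ring

end St12aux

set_option maxHeartbeats 1000000 in
open St12aux in
/-- For α ∈ (0,1), β = α+1 and a finitizator φ there is a constant
C > 0, depending only on α and φ, such that for all ε > 0 and all t,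
|F^{[ε]}(t)| ≤ C·min(ε^{−β}, |t|^{−β}).  (The bound |t|^{−β} is asserted for t ≠ 0,
since at t = 0 the min is just ε^{−β}.) -/
theorem statement12 (α : ℝ) (hα : α ∈ Set.Ioo (0 : ℝ) 1) (β : ℝ) (hβ : β = α + 1)
    (φ : ℝ → ℝ) (hφs : ContDiff ℝ (⊤ : ℕ∞) φ) (hφc : HasCompactSupport φ)
    (hφ0 : ∀ x, 0 ≤ φ x) (hφsupp : tsupport φ ⊆ Set.Ioo (-(1 / 2) : ℝ) (1 / 2))
    (hφ1 : ∫ x : ℝ, φ x = 1) :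
    ∃ C > (0 : ℝ), ∀ ε > (0 : ℝ), ∀ t : ℝ,
      ‖Feps α φ ε t‖ ≤ C * ε ^ (-β) ∧
      (t ≠ 0 → ‖Feps α φ ε t‖ ≤ C * min (ε ^ (-β)) (|t| ^ (-β))) := by
  obtain ⟨hα0, hα1⟩ := hα
  have h1α : (0:ℝ) < 1 - α := by linarith
  obtain ⟨M, hM0, hM⟩ := exists_bound (hφs.continuous_deriv (by simp)) hφc.deriv
  set C : ℝ := α⁻¹ * M * (2 / (1 - α) + 1) + 2 * M + 1 with hC
  have hCpos : 0 < C := by positivity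
  refine ⟨C, hCpos, ?_⟩
  intro ε hε t
  -- the rescaled bump
  set g : ℝ → ℝ := fun x => ε⁻¹ * φ (x / ε) with hgdef
  have hgs : ContDiff ℝ (⊤ : ℕ∞) g := contDiff_const.mul (hφs.comp (contDiff_id.div_const ε))
  have hout : ∀ x : ℝ, x ∉ Icc (-(ε/2)) (ε/2) → x / ε ∉ tsupport φ := by
    intro x hx hmem
    have h2 := hφsupp hmem
    simp only [mem_Ioo] at h2
    have h3 : -(ε/2) < x := by
      have := (div_lt_iff₀ hε).1 h2.2
      have h4 : -(1/2 : ℝ) < x / ε := h2.1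
      have := (lt_div_iff₀ hε).1 h4
      linarith
    have h4 : x < ε/2 := by
      have := (div_lt_iff₀ hε).1 h2.2
      linarith
    exact hx ⟨h3.le, h4.le⟩
  have hgc : HasCompactSupport g := by
    apply HasCompactSupport.intro (isCompact_Icc (a := -(ε/2)) (b := ε/2))
    intro x hx
    rw [hgdef]
    simp [image_eq_zero_of_notMem_tsupport (hout x hx)]
  -- derivative of g
  have hgd : ∀ x : ℝ, HasDerivAt g (ε⁻¹ * (deriv φ (x / ε) * ε⁻¹)) x := by
    intro x
    have h1 : HasDerivAt (fun y : ℝ => y / ε) ε⁻¹ x := by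
      simpa using (hasDerivAt_id x).div_const ε
    have h2 : HasDerivAt φ (deriv φ (x / ε)) (x / ε) :=
      (hφs.differentiable (by simp) (x / ε)).hasDerivAt
    exact (h2.comp x h1).const_mul ε⁻¹
  have hderiv_g : deriv g = fun x => ε⁻¹ * (deriv φ (x / ε) * ε⁻¹) :=
    funext fun x => (hgd x).deriv
  set c₁ : ℝ := ε⁻¹ * M * ε⁻¹ with hc₁
  have hc₁0 : 0 < c₁ := by positivity
  have hdg_bound : ∀ x, |deriv g x| ≤ c₁ := by
    intro x
    rw [hderiv_g]
    simp only [abs_mul, abs_inv, abs_of_pos hε, hc₁]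
    have h5 := hM (x / ε)
    have h6 : 0 ≤ ε⁻¹ := (inv_pos.2 hε).le
    have h7 := abs_nonneg (deriv φ (x / ε))
    calc ε⁻¹ * (|deriv φ (x / ε)| * ε⁻¹) ≤ ε⁻¹ * (M * ε⁻¹) := by
          apply mul_le_mul_of_nonneg_left (mul_le_mul_of_nonneg_right h5 h6) h6
      _ = ε⁻¹ * M * ε⁻¹ := by ring
  have hdg_supp : ∀ x : ℝ, x ∉ Icc (-(ε/2)) (ε/2) → deriv g x = 0 := by
    intro x hx
    rw [hderiv_g]
    have h8 : deriv φ (x / ε) = 0 := by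
      by_contra h
      exact (hout x hx) (support_deriv_subset (Function.mem_support.2 h))
    simp [h8]
  -- the key integral formula
  have hkey := key_deriv ⟨hα0, hα1⟩ hgs hgc t
  have hFeps : Feps α φ ε t
      = (α⁻¹ : ℝ) • ∫ x : ℝ, ((deriv g x : ℝ) : ℂ) * ((k α (x - t) : ℝ) : ℂ) := by
    have h0 : Feps α φ ε = Walpha α (fun x => (g x : ℂ)) := rfl
    rw [h0, Walpha, hkey.2.deriv]
  set I : ℂ := ∫ x : ℝ, ((deriv g x : ℝ) : ℂ) * ((k α (x - t) : ℝ) : ℂ) with hI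
  have hnorm : ‖Feps α φ ε t‖ = α⁻¹ * ‖I‖ := by
    rw [hFeps, norm_smul, Real.norm_eq_abs, abs_of_pos (inv_pos.2 hα0)]
  have hIcc_meas : (volume (Icc (-(ε/2)) (ε/2))).toReal = ε := by
    rw [Real.volume_Icc, show ε/2 - -(ε/2) = ε by ring, ENNReal.toReal_ofReal hε.le]
  have hrpow_nonneg : ∀ x : ℝ, (0:ℝ) ≤ |x - t| ^ (-α) :=
    fun x => Real.rpow_nonneg (abs_nonneg _) _
  ---------------------------------------------------------------
  -- BOUND 1 : ‖Feps‖ ≤ C ε^{-β}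
  ---------------------------------------------------------------
  have bound1 : ‖Feps α φ ε t‖ ≤ C * ε ^ (-β) := by
    set h : ℝ → ℝ := fun x => c₁ * ((Icc (t-ε) (t+ε)).indicator (fun x => |x - t| ^ (-α)) x
      + (Icc (-(ε/2)) (ε/2)).indicator (fun _ => ε ^ (-α)) x) with hh
    have hint1 : Integrable ((Icc (t-ε) (t+ε)).indicator (fun x => |x - t| ^ (-α))) :=
      (integrable_indicator_iff measurableSet_Icc).2
        (integrableOn_abs_rpow_shift ⟨hα0, hα1⟩ t (t-ε) (t+ε) (by linarith))
    have hint2 : Integrable ((Icc (-(ε/2)) (ε/2)).indicator (fun _ : ℝ => ε ^ (-α))) :=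
      (integrable_indicator_iff measurableSet_Icc).2
        (integrableOn_const measure_Icc_lt_top.ne)
    have hh_int : Integrable h := ((hint1.add hint2).const_mul c₁)
    have hpt : ∀ x : ℝ, ‖((deriv g x : ℝ) : ℂ) * ((k α (x - t) : ℝ) : ℂ)‖ ≤ h x := by
      intro x
      rw [norm_mul, Complex.norm_real, Complex.norm_real, Real.norm_eq_abs, Real.norm_eq_abs]
      have hind1 : 0 ≤ (Icc (t-ε) (t+ε)).indicator (fun x => |x - t| ^ (-α)) x :=
        indicator_nonneg (fun y _ => hrpow_nonneg y) x
      have hind2 : 0 ≤ (Icc (-(ε/2)) (ε/2)).indicator (fun _ : ℝ => ε ^ (-α)) x :=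
        indicator_nonneg (fun y _ => Real.rpow_nonneg hε.le _) x
      by_cases hx : x ∈ Icc (-(ε/2)) (ε/2)
      · have hk := abs_k_le α (x - t)
        by_cases hxt : |x - t| ≤ ε
        · have hmem : x ∈ Icc (t-ε) (t+ε) := by
            rcases abs_le.1 hxt with ⟨ha, hb⟩
            exact ⟨by linarith, by linarith⟩
          have : |deriv g x| * |k α (x - t)| ≤ c₁ * |x - t| ^ (-α) :=
            mul_le_mul (hdg_bound x) hk (abs_nonneg _) hc₁0.le
          refine this.trans ?_
          rw [hh]
          simp only [indicator_of_mem hmem]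
          nlinarith [hind2, hc₁0.le]
        · have hxe : ε ≤ |x - t| := (not_le.1 hxt).le
          have h9 : |x - t| ^ (-α) ≤ ε ^ (-α) :=
            Real.rpow_le_rpow_of_nonpos hε hxe (by linarith)
          have : |deriv g x| * |k α (x - t)| ≤ c₁ * ε ^ (-α) :=
            mul_le_mul (hdg_bound x) (hk.trans h9) (abs_nonneg _) hc₁0.le
          refine this.trans ?_
          rw [hh]
          simp only [indicator_of_mem hx]
          nlinarith [hind1, hc₁0.le]
      · rw [hdg_supp x hx]
        simp only [abs_zero, zero_mul]
        rw [hh]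
        nlinarith [hc₁0.le]
    have hInorm : ‖I‖ ≤ ∫ x : ℝ, h x := by
      rw [hI]
      exact norm_integral_le_of_norm_le hh_int (Filter.Eventually.of_forall hpt)
    have hIval : (∫ x : ℝ, h x) = c₁ * (2 * ε ^ (1-α) / (1-α) + ε * ε ^ (-α)) := by
      rw [hh]
      rw [integral_const_mul, integral_add hint1 hint2, integral_indicator measurableSet_Icc,
        integral_indicator measurableSet_Icc, integral_abs_rpow_shift ⟨hα0, hα1⟩ t ε hε,
        setIntegral_const, measureReal_def, hIcc_meas]
      simp [smul_eq_mul]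
    have hεα : ε * ε ^ (-α) = ε ^ (1-α) := by
      rw [show (1:ℝ) - α = 1 + -α by ring, Real.rpow_add hε, Real.rpow_one]
    have hpow : ε⁻¹ * ε⁻¹ * ε ^ (1-α) = ε ^ (-β) := by
      rw [← Real.rpow_neg_one ε, ← Real.rpow_add hε, ← Real.rpow_add hε]
      congr 1
      rw [hβ]; ring
    have harith : α⁻¹ * (c₁ * (2 * ε ^ (1-α) / (1-α) + ε * ε ^ (-α)))
        = (α⁻¹ * M * (2 / (1-α) + 1)) * ε ^ (-β) := by
      rw [hεα, ← hpow, hc₁]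
      field_simp
    calc ‖Feps α φ ε t‖ = α⁻¹ * ‖I‖ := hnorm
      _ ≤ α⁻¹ * ∫ x : ℝ, h x := by
          exact mul_le_mul_of_nonneg_left hInorm (inv_pos.2 hα0).le
      _ = (α⁻¹ * M * (2 / (1-α) + 1)) * ε ^ (-β) := by rw [hIval, harith]
      _ ≤ C * ε ^ (-β) := by
          apply mul_le_mul_of_nonneg_right _ (Real.rpow_nonneg hε.le _)
          rw [hC]
          nlinarith [hM0]
  ---------------------------------------------------------------
  -- BOUND 2 : if ε ≤ |t| then ‖Feps‖ ≤ C |t|^{-β}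
  ---------------------------------------------------------------
  have bound2 : ε ≤ |t| → ‖Feps α φ ε t‖ ≤ C * |t| ^ (-β) := by
    intro hεt
    have ht0 : 0 < |t| := lt_of_lt_of_le hε hεt
    have hdgC_int : Integrable (fun x : ℝ => ((deriv g x : ℝ) : ℂ)) :=
      ((hgs.continuous_deriv (by simp)).integrable_of_hasCompactSupport hgc.deriv).ofReal
    have hzero : (∫ x : ℝ, ((deriv g x : ℝ) : ℂ)) = 0 := by
      have hor : (∫ x : ℝ, ((deriv g x : ℝ) : ℂ))
          = (((∫ x : ℝ, deriv g x : ℝ)) : ℂ) := integral_ofReal (𝕜 := ℂ)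
      rw [hor, integral_deriv_zero hgs hgc, Complex.ofReal_zero]
    have hsub : I = ∫ x : ℝ, ((deriv g x : ℝ) : ℂ)
        * (((k α (x - t) - k α (-t) : ℝ)) : ℂ) := by
      have h2 : Integrable (fun x : ℝ => ((deriv g x : ℝ) : ℂ) * ((k α (-t) : ℝ) : ℂ)) :=
        hdgC_int.mul_const _
      have h3 : (∫ x : ℝ, ((deriv g x : ℝ) : ℂ) * (((k α (x - t) - k α (-t) : ℝ)) : ℂ))
          = (∫ x : ℝ, (((deriv g x : ℝ) : ℂ) * ((k α (x - t) : ℝ) : ℂ)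
              - ((deriv g x : ℝ) : ℂ) * ((k α (-t) : ℝ) : ℂ))) := by
        congr 1
        funext x
        push_cast
        ring
      rw [h3, integral_sub hkey.1 h2, integral_mul_const, hzero, zero_mul, sub_zero]
    set c₂ : ℝ := c₁ * (α * (|t|/2) ^ (-(α+1)) * (ε/2)) with hc₂
    have hc₂0 : 0 ≤ c₂ := by
      have := Real.rpow_nonneg (by positivity : (0:ℝ) ≤ |t|/2) (-(α+1))
      positivity
    set h2f : ℝ → ℝ := (Icc (-(ε/2)) (ε/2)).indicator (fun _ => c₂) with hh2
    have hh2_int : Integrable h2f :=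
      (integrable_indicator_iff measurableSet_Icc).2
        (integrableOn_const measure_Icc_lt_top.ne)
    have hpt2 : ∀ x : ℝ, ‖((deriv g x : ℝ) : ℂ)
        * (((k α (x - t) - k α (-t) : ℝ)) : ℂ)‖ ≤ h2f x := by
      intro x
      rw [norm_mul, Complex.norm_real, Complex.norm_real, Real.norm_eq_abs, Real.norm_eq_abs]
      by_cases hx : x ∈ Icc (-(ε/2)) (ε/2)
      · have hxabs : |x| ≤ ε/2 := by
          rw [abs_le]
          exact ⟨hx.1, hx.2⟩
        have hkb := k_sub_bound ⟨hα0, hα1⟩ hε hεt hxabs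
        have hstep : |k α (x - t) - k α (-t)| ≤ α * (|t|/2) ^ (-(α+1)) * (ε/2) := by
          refine hkb.trans ?_
          have h10 : 0 ≤ α * (|t|/2) ^ (-(α+1)) := by
            have := Real.rpow_nonneg (by positivity : (0:ℝ) ≤ |t|/2) (-(α+1))
            positivity
          exact mul_le_mul_of_nonneg_left hxabs h10
        have : |deriv g x| * |k α (x - t) - k α (-t)| ≤ c₁ * (α * (|t|/2) ^ (-(α+1)) * (ε/2)) :=
          mul_le_mul (hdg_bound x) hstep (abs_nonneg _) hc₁0.le
        rw [hh2, indicator_of_mem hx]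
        exact this
      · rw [hdg_supp x hx, hh2, indicator_of_notMem hx]
        simp
    have hInorm : ‖I‖ ≤ ∫ x : ℝ, h2f x := by
      rw [hsub]
      exact norm_integral_le_of_norm_le hh2_int (Filter.Eventually.of_forall hpt2)
    have hIval : (∫ x : ℝ, h2f x) = ε * c₂ := by
      rw [hh2, integral_indicator measurableSet_Icc, setIntegral_const, measureReal_def, hIcc_meas, smul_eq_mul]
    have hhalf : (|t|/2) ^ (-(α+1)) = 2 ^ (α+1) * |t| ^ (-(α+1)) := by
      rw [Real.div_rpow (abs_nonneg t) (by norm_num : (0:ℝ) ≤ 2)]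
      rw [Real.rpow_neg (by norm_num : (0:ℝ) ≤ 2) (α+1)]
      field_simp
    have h2b : (2:ℝ) ^ (α+1) ≤ 4 := by
      have h11 : (2:ℝ) ^ (α+1) ≤ 2 ^ (2:ℝ) :=
        Real.rpow_le_rpow_of_exponent_le one_le_two (by linarith)
      have h12 : (2:ℝ) ^ (2:ℝ) = 4 := by
        rw [show (2:ℝ) = ((2:ℕ):ℝ) from by norm_num]
        rw [Real.rpow_natCast]
        norm_num
      linarith
    have harith2 : α⁻¹ * (ε * c₂) = (M/2) * (|t|/2) ^ (-(α+1)) := by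
      rw [hc₂, hc₁]
      field_simp
    have htb : (0:ℝ) ≤ |t| ^ (-(α+1)) := Real.rpow_nonneg (abs_nonneg t) _
    calc ‖Feps α φ ε t‖ = α⁻¹ * ‖I‖ := hnorm
      _ ≤ α⁻¹ * (ε * c₂) := by
          rw [← hIval]
          exact mul_le_mul_of_nonneg_left hInorm (inv_pos.2 hα0).le
      _ = (M/2) * (|t|/2) ^ (-(α+1)) := harith2
      _ = (M/2) * (2 ^ (α+1) * |t| ^ (-(α+1))) := by rw [hhalf]
      _ ≤ (M/2) * (4 * |t| ^ (-(α+1))) := by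
          apply mul_le_mul_of_nonneg_left _ (by linarith : (0:ℝ) ≤ M/2)
          exact mul_le_mul_of_nonneg_right h2b htb
      _ = 2 * M * |t| ^ (-(α+1)) := by ring
      _ ≤ C * |t| ^ (-β) := by
          rw [hβ]
          apply mul_le_mul_of_nonneg_right _ htb
          rw [hC]
          have : 0 < α⁻¹ * M * (2 / (1-α) + 1) := by positivity
          linarith
  refine ⟨bound1, fun ht0 => ?_⟩
  rcases le_or_gt ε |t| with hεt | hεt
  · have := le_min bound1 (bound2 hεt)
    rwa [← mul_min_of_nonneg _ _ hCpos.le] at this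
  · have htpos : 0 < |t| := abs_pos.2 ht0
    have hmin : min (ε ^ (-β)) (|t| ^ (-β)) = ε ^ (-β) := by
      apply min_eq_left
      apply Real.rpow_le_rpow_of_nonpos htpos hεt.le
      rw [hβ]
      linarith
    rw [hmin]
    exact bound1
end

section
/- There exist τ₀ ∈ (0,1) and a function C : (0, τ₀) → (0, ∞) with C(τ) → 0 as τ → 0, such that the following holds: whenever τ ∈ (0, τ₀) and δ ∈ (0,1) satisfy 1/δ ∈ ℕ, 1/τ ∈ ℕ and τ/δ ∈ ℕ, then for every n ≥ 1 the Lebesgue measure of E_n = {x ∈ I : D_n(x) ≥ n/2} is at most C(τ)/n². -/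
open MeasureTheory

/-- Center of the interval of the partition `H_i` of `I = (−1/2, 1/2)` into intervals
of length `δ^i` which contains `x`. -/
noncomputable def ctr (δ : ℝ) (i : ℕ) (x : ℝ) : ℝ :=
  -(1 / 2) + ((⌊(x + 1 / 2) / δ ^ i⌋ : ℝ) + 1 / 2) * δ ^ i

/-- ξ′^{(k)}_i(x) = 1 if x lies in the central subinterval of relative length τ^k of
its interval of the partition H_i, and 0 otherwise. -/
noncomputable def xiP (δ τ : ℝ) (k i : ℕ) (x : ℝ) : ℝ :=
  if |x - ctr δ i x| < τ ^ k * δ ^ i / 2 then 1 else 0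

/-- D^k_n(x) = Σ_{l=1}^n ξ′^{(k)}_l(x). -/
noncomputable def Dkn (δ τ : ℝ) (k n : ℕ) (x : ℝ) : ℝ :=
  ∑ l ∈ Finset.Icc 1 n, xiP δ τ k l x

/-- D_n(x) = Σ_{k=1}^∞ D^k_n(x). -/
noncomputable def Dn (δ τ : ℝ) (n : ℕ) (x : ℝ) : ℝ :=
  ∑' k : ℕ, Dkn δ τ (k + 1) n x

/-!
Write `b = 1/δ`. The condition `ξ′^{(k)}_l(x) = 1` says that the fractional part of
`b^l (x + 1/2)` lies in an interval `J_k` of length `τ^k`, and since `1/τ ∈ ℕ` the endpoints of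
`J_k` lie on the grid `b^{-(k+1)} ℤ`. A set defined by conditions on `fract (b^j y)` with
`j ≥ k + 1` is `b^{-(k+1)}`-periodic, hence meets `J_k` in proportion `τ^k`; peeling off the
smallest level, the conditions at levels that are pairwise at least `k + 1` apart are therefore
independent, and all `s` of them hold on a set of measure `τ^{ks}`.

If `D^k_n(x) > (k+1) s`, some residue class mod `k + 1` contains `s + 1` levels where
`ξ′^{(k)} = 1`, so this happens on a set of measure at most `C(n, s+1) τ^{k(s+1)}`, which is
`≤ (2^16 τ)^k / n²` for `s = ⌊n / 4^{k+1}⌋`. Off these exceptional sets `D_n ≤ n/4`, and the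
geometric series over `k` gives `C(τ) = 2^17 τ`.
-/

open Set Function Int
open scoped Finset

section PeriodicSets

variable {S : Set ℝ}

theorem volume_inter_Ico_add_of_periodic {c : ℝ} (hS : Periodic (· ∈ S) c) (a b : ℝ) :
    volume (S ∩ Ico (a + c) (b + c)) = volume (S ∩ Ico a b) := by
  have hpre : (· + c) ⁻¹' S = S := Set.ext fun x => Iff.of_eq (hS x)
  rw [← measure_preimage_add_right volume c, preimage_inter, preimage_add_const_Ico, hpre,
    add_sub_cancel_right, add_sub_cancel_right]

theorem volume_inter_Ico_nat_mul_of_periodic {T : ℝ} (hS : Periodic (· ∈ S) T) (hT : 0 ≤ T)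
    {u v : ℕ} (huv : u ≤ v) :
    volume (S ∩ Ico (u * T) (v * T)) = (v - u : ℕ) * volume (S ∩ Ico 0 T) := by
  induction v, huv using Nat.le_induction with
  | base => simp
  | succ v huv ih =>
    have huT : (u : ℝ) * T ≤ v * T := by gcongr
    have hvT : (v : ℝ) * T ≤ (v + 1 : ℕ) * T := by gcongr; omega
    have hsplit := measure_inter_add_sdiff (μ := volume) (S ∩ Ico (u * T) ((v + 1 : ℕ) * T))
      (measurableSet_Ico (a := u * T) (b := v * T))
    have hlast : volume (S ∩ Ico ((v : ℝ) * T) ((v + 1 : ℕ) * T)) = volume (S ∩ Ico 0 T) := by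
      simpa [add_mul, add_comm] using volume_inter_Ico_add_of_periodic (hS.nat_mul v) 0 T
    have hdiff : (S ∩ Ico ((u : ℝ) * T) ((v + 1 : ℕ) * T)) \ Ico ((u : ℝ) * T) (v * T)
        = S ∩ Ico ((v : ℝ) * T) ((v + 1 : ℕ) * T) := by
      ext x
      simp only [mem_sdiff, mem_inter_iff, mem_Ico, not_and, not_lt]
      constructor
      · rintro ⟨⟨hx, h1, h2⟩, h3⟩; exact ⟨hx, h3 h1, h2⟩
      · rintro ⟨hx, h1, h2⟩; exact ⟨⟨hx, huT.trans h1, h2⟩, fun _ => h1⟩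
    rw [inter_assoc, Ico_inter_Ico, max_self, min_eq_right hvT, hdiff, ih, hlast] at hsplit
    rw [← hsplit, Nat.sub_add_comm huv, Nat.cast_succ, add_one_mul]

theorem volume_inter_Ioo_div_of_periodic {q : ℕ} (hq : 0 < q) (hS : Periodic (· ∈ S) (1 / q))
    {u v : ℕ} (huv : u ≤ v) :
    volume (S ∩ Ioo (u / q : ℝ) (v / q)) =
      volume (Ioo (u / q : ℝ) (v / q)) * volume (S ∩ Ico 0 1) := by
  have hq' : (0 : ℝ) < q := by exact_mod_cast hq
  have hcells := fun {a b : ℕ} (h : a ≤ b) =>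
    volume_inter_Ico_nat_mul_of_periodic hS (by positivity) h
  have hone : volume (S ∩ Ico 0 1) = q * volume (S ∩ Ico 0 (1 / q)) := by
    simpa [hq'.ne'] using hcells (Nat.zero_le q)
  have hlen : ENNReal.ofReal ((v - u) / q) * q = (v - u : ℕ) := by
    have huv' : (0 : ℝ) ≤ v - u := sub_nonneg.2 (by exact_mod_cast huv)
    rw [← ENNReal.ofReal_natCast q, ← ENNReal.ofReal_mul (by positivity),
      div_mul_cancel₀ _ hq'.ne', ← Nat.cast_sub huv, ENNReal.ofReal_natCast]
  have hae :
      (S ∩ Ioo (u / q : ℝ) (v / q) : Set ℝ) =ᵐ[volume] (S ∩ Ico (u / q : ℝ) (v / q) : Set ℝ) :=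
    ae_eq_set_inter (ae_eq_refl S) Ioo_ae_eq_Ico
  rw [measure_congr hae, Real.volume_Ioo, hone, ← mul_assoc, ← sub_div, hlen, ← hcells huv,
    div_eq_mul_one_div (u : ℝ), div_eq_mul_one_div (v : ℝ)]

end PeriodicSets

theorem Int.fract_natCast_mul_fract (n : ℕ) (t : ℝ) : fract (n * fract t) = fract (n * t) := by
  conv_rhs => rw [← floor_add_fract t, mul_add, add_comm]
  exact_mod_cast (fract_add_intCast _ (n * ⌊t⌋)).symm

theorem periodic_fract_natCast_mul_of_dvd {m n : ℕ} (h : m ∣ n) :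
    Periodic (fun y : ℝ => fract (n * y)) (1 / m) := by
  obtain ⟨c, rfl⟩ := h
  intro y
  rcases eq_or_ne m 0 with rfl | hm
  · simp
  have : ((m * c : ℕ) : ℝ) * (1 / m) = c := by field_simp; push_cast; ring
  simp only [mul_add, this, fract_add_natCast]

theorem volume_fract_natCast_mul_mem {M : ℕ} (hM : 0 < M) {B : Set ℝ} (hB : B ⊆ Ico 0 1) :
    volume ({y | fract ((M : ℝ) * y) ∈ B} ∩ Ico 0 1) = volume B := by
  have hM' : (0 : ℝ) < M := by exact_mod_cast hM
  have hper : Periodic (· ∈ {y | fract ((M : ℝ) * y) ∈ B}) (1 / M) :=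
    (periodic_fract_natCast_mul_of_dvd dvd_rfl).comp (· ∈ B)
  have hcell : {y | fract ((M : ℝ) * y) ∈ B} ∩ Ico 0 (1 / M) = (fun y => (M : ℝ) * y) ⁻¹' B := by
    ext y
    simp only [mem_inter_iff, mem_ofPred_eq, mem_Ico, mem_preimage]
    constructor
    · rintro ⟨hy, h0, h1⟩
      rwa [fract_eq_self.2 ⟨by positivity, by rwa [lt_div_iff₀ hM', mul_comm] at h1⟩] at hy
    · intro hy
      obtain ⟨h0, h1⟩ := hB hy
      rw [fract_eq_self.2 ⟨h0, h1⟩]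
      exact ⟨hy, nonneg_of_mul_nonneg_right h0 hM', by rwa [lt_div_iff₀ hM', mul_comm]⟩
  have := volume_inter_Ico_nat_mul_of_periodic hper (by positivity) (Nat.zero_le M)
  rw [Nat.cast_zero, zero_mul, mul_one_div_cancel hM'.ne', Nat.sub_zero, hcell,
    Real.volume_preimage_mul_left hM'.ne', abs_of_pos (inv_pos.2 hM'), ← mul_assoc,
    ← ENNReal.ofReal_natCast M, ← ENNReal.ofReal_mul hM'.le, mul_inv_cancel₀ hM'.ne',
    ENNReal.ofReal_one, one_mul] at this
  exact this

theorem fract_pow_sub_mul_fract_pow_mul {N a l : ℕ} (h : a ≤ l) (y : ℝ) :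
    fract (((N ^ (l - a) : ℕ) : ℝ) * fract (((N ^ a : ℕ) : ℝ) * y)) = fract ((N : ℝ) ^ l * y) := by
  rw [fract_natCast_mul_fract, ← mul_assoc, ← Nat.cast_mul, ← pow_add, Nat.sub_add_cancel h,
    Nat.cast_pow]

def GapsAtLeast (g : ℕ) (A : Finset ℕ) : Prop :=
  ∀ a ∈ A, ∀ c ∈ A, a < c → a + g ≤ c

theorem volume_forall_fract_pow_mul_mem_Ioo {N g u v : ℕ} (hN : 0 < N) (huv : u ≤ v)
    (hv : v ≤ N ^ g) {A : Finset ℕ} (hA : GapsAtLeast g A) :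
    volume ({y | ∀ l ∈ A, fract ((N : ℝ) ^ l * y) ∈ Ioo (u / N ^ g : ℝ) (v / N ^ g)} ∩ Ico 0 1)
      = volume (Ioo (u / N ^ g : ℝ) (v / N ^ g)) ^ A.card := by
  set J := Ioo (u / N ^ g : ℝ) (v / N ^ g)
  have hNg : (0 : ℝ) < N ^ g := by positivity
  have hJ : J ⊆ Ico 0 1 := fun z ⟨h0, h1⟩ =>
    ⟨(div_nonneg (Nat.cast_nonneg u) hNg.le).trans h0.le,
      h1.trans_le ((div_le_one hNg).2 (by exact_mod_cast hv))⟩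
  induction A using Finset.induction_on_min with
  | empty => simp
  | insert a s has ih =>
    have hag : ∀ l ∈ s, a + g ≤ l := fun l hl =>
      hA a (Finset.mem_insert_self a s) l (Finset.mem_insert_of_mem hl) (has l hl)
    set C := {z : ℝ | ∀ l ∈ s, fract (((N ^ (l - a) : ℕ) : ℝ) * z) ∈ J}
    have hC : Periodic (· ∈ C) (1 / (N ^ g : ℕ)) := fun z =>
      propext <| forall₂_congr fun l hl => Iff.of_eq <| congrArg (· ∈ J) <|
        periodic_fract_natCast_mul_of_dvd (pow_dvd_pow N (by have := hag l hl; omega)) z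
    have hmemC (y : ℝ) :
        fract (((N ^ a : ℕ) : ℝ) * y) ∈ C ↔ ∀ l ∈ s, fract ((N : ℝ) ^ l * y) ∈ J :=
      forall₂_congr fun l hl => by rw [fract_pow_sub_mul_fract_pow_mul (has l hl).le]
    have hnew : {y | ∀ l ∈ insert a s, fract ((N : ℝ) ^ l * y) ∈ J} ∩ Ico 0 1
        = {y | fract (((N ^ a : ℕ) : ℝ) * y) ∈ C ∩ J} ∩ Ico 0 1 := by
      ext y
      simp only [mem_inter_iff, mem_ofPred_eq, hmemC]
      simp only [Finset.mem_insert, forall_eq_or_imp, Nat.cast_pow]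
      tauto
    have hold : {y | ∀ l ∈ s, fract ((N : ℝ) ^ l * y) ∈ J} ∩ Ico 0 1
        = {y | fract (((N ^ a : ℕ) : ℝ) * y) ∈ C ∩ Ico 0 1} ∩ Ico 0 1 := by
      ext y
      simp only [mem_inter_iff, mem_ofPred_eq, hmemC, mem_Ico, fract_nonneg, fract_lt_one,
        and_true]
    have hs : GapsAtLeast g s := fun x hx y hy =>
      hA x (Finset.mem_insert_of_mem hx) y (Finset.mem_insert_of_mem hy)
    have hJq : J = Ioo (u / (N ^ g : ℕ) : ℝ) (v / (N ^ g : ℕ)) := by simp [J]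
    rw [hnew, volume_fract_natCast_mul_mem (by positivity) (inter_subset_right.trans hJ), hJq,
      volume_inter_Ioo_div_of_periodic (by positivity) hC huv, ← hJq,
      ← volume_fract_natCast_mul_mem (M := N ^ a) (by positivity) inter_subset_right, ← hold,
      ih hs, Finset.card_insert_of_notMem fun h => (has a h).false, pow_succ, mul_comm]

theorem abs_sub_ctr_lt_iff {δ : ℝ} {b : ℕ} (hδ : (b : ℝ) * δ = 1) (r : ℝ) (l : ℕ) (x : ℝ) :
    |x - ctr δ l x| < r * δ ^ l / 2 ↔
      fract ((b : ℝ) ^ l * (x + 1 / 2)) ∈ Ioo ((1 - r) / 2) ((1 + r) / 2) := by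
  have hbδ : (b : ℝ) ^ l * δ ^ l = 1 := by rw [← mul_pow, hδ, one_pow]
  have hδl : 0 < δ ^ l := pos_of_mul_pos_right (hbδ ▸ one_pos) (by positivity)
  set t := (b : ℝ) ^ l * (x + 1 / 2)
  have hctr : x - ctr δ l x = δ ^ l * (fract t - 1 / 2) := by
    have ht : (x + 1 / 2) / δ ^ l = t := by
      rw [div_eq_iff hδl.ne', mul_comm, ← mul_assoc, mul_comm (δ ^ l), hbδ, one_mul]
    rw [ctr, ht, fract, show x = δ ^ l * t - 1 / 2 by
      rw [← mul_assoc, mul_comm (δ ^ l), hbδ, one_mul]; ring]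
    ring
  rw [hctr, abs_mul, abs_of_pos hδl, mul_comm r, mul_div_assoc, mul_lt_mul_iff_right₀ hδl,
    abs_sub_lt_iff, mem_Ioo]
  constructor <;> rintro ⟨h1, h2⟩ <;> constructor <;> linarith

theorem volume_forall_abs_sub_ctr_lt_le {δ τ : ℝ} {b m k : ℕ} (hb : 0 < b) (hmb : m ∣ b)
    (hδ : (b : ℝ) * δ = 1) (hτ : (m : ℝ) * δ = τ) {A : Finset ℕ} (hA : GapsAtLeast (k + 1) A) :
    volume {x ∈ Ioo (-(1 / 2) : ℝ) (1 / 2) | ∀ l ∈ A, |x - ctr δ l x| < τ ^ k * δ ^ l / 2}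
      ≤ ENNReal.ofReal (τ ^ k) ^ A.card := by
  -- `(1 ∓ τ^k) / 2` lie on the grid `b^{-(k+1)} ℤ`, as `b^(k+1) - b * m^k` is even
  obtain ⟨u, hu⟩ : ∃ u, 2 * u + b * m ^ k = b ^ (k + 1) := by
    have hle : b * m ^ k ≤ b ^ (k + 1) := by
      rw [pow_succ']; gcongr; exact Nat.le_of_dvd hb hmb
    have heven : Even (b ^ (k + 1) - b * m ^ k) := by
      rw [Nat.even_sub hle, Nat.even_pow, Nat.even_mul, Nat.even_pow]
      refine ⟨fun h => Or.inl h.1, ?_⟩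
      rintro (h | ⟨h, -⟩)
      · exact ⟨h, k.succ_ne_zero⟩
      · exact ⟨even_iff_two_dvd.2 ((even_iff_two_dvd.1 h).trans hmb), k.succ_ne_zero⟩
    obtain ⟨u, hu⟩ := heven
    exact ⟨u, by omega⟩
  have hδb : δ = 1 / b := eq_one_div_of_mul_eq_one_right hδ
  have hu' : 2 * (u : ℝ) + b * m ^ k = b ^ (k + 1) := by exact_mod_cast hu
  have hJ : Ioo ((1 - τ ^ k) / 2) ((1 + τ ^ k) / 2)
      = Ioo (u / b ^ (k + 1) : ℝ) ((u + b * m ^ k : ℕ) / b ^ (k + 1)) := by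
    rw [← hτ, hδb, mul_one_div, div_pow]
    congr 1 <;> field_simp <;> push_cast <;> linear_combination (-(b : ℝ) ^ k) * hu'
  have hτk : τ ^ k = (u + b * m ^ k : ℕ) / b ^ (k + 1) - u / b ^ (k + 1) := by
    rw [← hτ, hδb, mul_one_div, div_pow]; field_simp; push_cast; ring
  calc volume {x ∈ Ioo (-(1 / 2) : ℝ) (1 / 2) | ∀ l ∈ A, |x - ctr δ l x| < τ ^ k * δ ^ l / 2}
      = volume ({y | ∀ l ∈ A, fract ((b : ℝ) ^ l * y) ∈ Ioo ((1 - τ ^ k) / 2) ((1 + τ ^ k) / 2)}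
          ∩ Ioo 0 1) := by
        conv_rhs => rw [← measure_preimage_add_right volume (1 / 2)]
        congr 1
        ext x
        simp only [mem_preimage, mem_inter_iff, mem_ofPred_eq, mem_Ioo, abs_sub_ctr_lt_iff hδ]
        constructor
        · rintro ⟨⟨h1, h2⟩, h⟩; exact ⟨h, by linarith, by linarith⟩
        · rintro ⟨h, h1, h2⟩; exact ⟨⟨by linarith, by linarith⟩, h⟩
    _ ≤ volume ({y | ∀ l ∈ A, fract ((b : ℝ) ^ l * y) ∈ Ioo ((1 - τ ^ k) / 2) ((1 + τ ^ k) / 2)}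
          ∩ Ico 0 1) := measure_mono (inter_subset_inter_right _ Ioo_subset_Ico_self)
    _ = ENNReal.ofReal (τ ^ k) ^ A.card := by
        rw [hJ, volume_forall_fract_pow_mul_mem_Ioo hb (by omega) (by omega) hA, Real.volume_Ioo,
          ← hτk]

theorem Dkn_eq_card (δ τ : ℝ) (k n : ℕ) (x : ℝ) :
    Dkn δ τ k n x = #{l ∈ Finset.Icc 1 n | |x - ctr δ l x| < τ ^ k * δ ^ l / 2} := by
  rw [Finset.natCast_card_filter]
  rfl

theorem exists_subset_card_eq_gapsAtLeast {g s : ℕ} (hg : 0 < g) {L : Finset ℕ}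
    (h : g * s < #L) : ∃ A ⊆ L, #A = s + 1 ∧ GapsAtLeast g A := by
  -- pigeonhole on residues mod `g`: distinct elements of one residue class are `g` apart
  obtain ⟨ρ, -, hρ⟩ := Finset.exists_lt_card_fiber_of_mul_lt_card_of_maps_to (f := (· % g))
    (t := Finset.range g) (fun a _ => Finset.mem_range.2 (Nat.mod_lt a hg)) (by simpa using h)
  obtain ⟨A, hAL, hA⟩ := Finset.exists_subset_card_eq hρ
  refine ⟨A, hAL.trans (Finset.filter_subset _ _), hA, fun a ha c hc hac => ?_⟩
  have hmod : c % g = a % g :=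
    (Finset.mem_filter.1 (hAL hc)).2.trans (Finset.mem_filter.1 (hAL ha)).2.symm
  have := Nat.le_of_dvd (by omega) (Nat.dvd_of_mod_eq_zero (Nat.sub_mod_eq_zero_of_mod_eq hmod))
  omega

theorem volume_lt_Dkn_le {δ τ : ℝ} {b m : ℕ} (hb : 0 < b) (hmb : m ∣ b) (hδ : (b : ℝ) * δ = 1)
    (hτ : (m : ℝ) * δ = τ) (k n s : ℕ) :
    volume {x ∈ Ioo (-(1 / 2) : ℝ) (1 / 2) | (((k + 1) * s : ℕ) : ℝ) < Dkn δ τ k n x}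
      ≤ ENNReal.ofReal (n.choose (s + 1) * (τ ^ k) ^ (s + 1)) := by
  classical
  have hτ0 : 0 ≤ τ := hτ ▸ mul_nonneg (Nat.cast_nonneg m)
    (pos_of_mul_pos_right (hδ ▸ one_pos) (Nat.cast_nonneg b)).le
  set 𝒜 := ((Finset.Icc 1 n).powersetCard (s + 1)).filter (GapsAtLeast (k + 1))
  have hcover : {x ∈ Ioo (-(1 / 2) : ℝ) (1 / 2) | (((k + 1) * s : ℕ) : ℝ) < Dkn δ τ k n x}
      ⊆ ⋃ A ∈ 𝒜,
          {x ∈ Ioo (-(1 / 2) : ℝ) (1 / 2) | ∀ l ∈ A, |x - ctr δ l x| < τ ^ k * δ ^ l / 2} := by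
    rintro x ⟨hx, hD⟩
    rw [Dkn_eq_card, Nat.cast_lt] at hD
    obtain ⟨A, hAL, hcard, hgap⟩ := exists_subset_card_eq_gapsAtLeast k.succ_pos hD
    exact mem_iUnion₂.2 ⟨A, Finset.mem_filter.2 ⟨Finset.mem_powersetCard.2
      ⟨hAL.trans (Finset.filter_subset _ _), hcard⟩, hgap⟩, hx,
      fun l hl => (Finset.mem_filter.1 (hAL hl)).2⟩
  have h𝒜 : #𝒜 ≤ n.choose (s + 1) := by
    simpa using Finset.card_filter_le ((Finset.Icc 1 n).powersetCard (s + 1)) (GapsAtLeast (k + 1))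
  calc _ ≤ ∑ A ∈ 𝒜, volume
        {x ∈ Ioo (-(1 / 2) : ℝ) (1 / 2) | ∀ l ∈ A, |x - ctr δ l x| < τ ^ k * δ ^ l / 2} :=
        (measure_mono hcover).trans (measure_biUnion_finset_le _ _)
    _ ≤ ∑ A ∈ 𝒜, ENNReal.ofReal (τ ^ k) ^ (s + 1) := Finset.sum_le_sum fun A hA => by
        obtain ⟨hA, hgap⟩ := Finset.mem_filter.1 hA
        rw [← (Finset.mem_powersetCard.1 hA).2]
        exact volume_forall_abs_sub_ctr_lt_le hb hmb hδ hτ hgap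
    _ ≤ n.choose (s + 1) * ENNReal.ofReal (τ ^ k) ^ (s + 1) := by
        rw [Finset.sum_const, nsmul_eq_mul]
        gcongr
    _ = _ := by
        rw [ENNReal.ofReal_mul (by positivity), ENNReal.ofReal_natCast,
          ENNReal.ofReal_pow (pow_nonneg hτ0 k)]

theorem Nat.choose_le_exp_mul_div_pow (n s : ℕ) :
    (n.choose s : ℝ) ≤ (Real.exp 1 * n / s) ^ s := by
  rcases s.eq_zero_or_pos with rfl | hs
  · simp
  have hs' : (0 : ℝ) < s := by exact_mod_cast hs
  have hfact : (s : ℝ) ^ s / s.factorial ≤ Real.exp 1 ^ s := by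
    simpa [Real.exp_one_pow] using Real.pow_div_factorial_le_exp s hs'.le s
  calc (n.choose s : ℝ) ≤ n ^ s / s.factorial := Nat.choose_le_pow_div s n
    _ = (n / s) ^ s * (s ^ s / s.factorial) := by
        rw [div_pow, mul_div_assoc', div_mul_cancel₀ _ (by positivity)]
    _ ≤ (n / s) ^ s * Real.exp 1 ^ s := by gcongr
    _ = (Real.exp 1 * n / s) ^ s := by rw [← mul_pow]; ring

theorem sq_mul_choose_mul_pow_le {τ : ℝ} (hτ0 : 0 ≤ τ) (hτ : τ ≤ 1 / 2 ^ 8) {k n S : ℕ}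
    (hk : k ≠ 0) (hn : n < S * 4 ^ (k + 1)) :
    (n : ℝ) ^ 2 * (n.choose S * (τ ^ k) ^ S) ≤ (2 ^ 16 * τ) ^ k := by
  have hS : S ≠ 0 := by rintro rfl; simp at hn
  have hS' : (0 : ℝ) < S := by exact_mod_cast Nat.pos_of_ne_zero hS
  set y : ℝ := 4 ^ (k + 1)
  have hny : (n : ℝ) ≤ S * y := by simp only [y]; exact_mod_cast hn.le
  have hchoose : (n.choose S : ℝ) ≤ (4 * y) ^ S := by
    refine (Nat.choose_le_exp_mul_div_pow n S).trans (pow_le_pow_left₀ (by positivity) ?_ S)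
    rw [div_le_iff₀ hS']
    nlinarith [Real.exp_one_lt_d9, Real.exp_pos 1, Nat.cast_nonneg (α := ℝ) n]
  have hsq : (n : ℝ) ^ 2 ≤ 4 ^ S * y ^ 2 := by
    have : (S : ℝ) ^ 2 ≤ 4 ^ S := by
      rw [show (4 : ℝ) ^ S = ((2 : ℝ) ^ S) ^ 2 by rw [← pow_mul, mul_comm, pow_mul]; norm_num]
      gcongr
      exact_mod_cast Nat.lt_two_pow_self.le
    calc (n : ℝ) ^ 2 ≤ (S * y) ^ 2 := by gcongr
      _ ≤ 4 ^ S * y ^ 2 := by rw [mul_pow]; gcongr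
  have hsmall : 4 * (4 * y) * τ ^ k ≤ 1 := by
    have h4τ : (4 * τ) ^ k ≤ 4 * τ := pow_le_of_le_one (by positivity) (by linarith) hk
    calc 4 * (4 * y) * τ ^ k = 4 ^ 3 * (4 * τ) ^ k := by rw [mul_pow]; ring
      _ ≤ 1 := by nlinarith
  calc (n : ℝ) ^ 2 * (n.choose S * (τ ^ k) ^ S)
      ≤ (4 ^ S * y ^ 2) * ((4 * y) ^ S * (τ ^ k) ^ S) := by gcongr
    _ = (4 * (4 * y) * τ ^ k) ^ S * y ^ 2 := by simp only [mul_pow]; ring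
    _ ≤ (4 * (4 * y) * τ ^ k) * y ^ 2 := by
        gcongr
        exact pow_le_of_le_one (by positivity) hsmall hS
    _ = 4 ^ (3 * k + 5) * τ ^ k := by ring
    _ ≤ 4 ^ (8 * k) * τ ^ k := by
        gcongr
        · norm_num
        · omega
    _ = (2 ^ 16 * τ) ^ k := by rw [mul_pow, pow_mul]; norm_num

theorem natCast_mul_div_four_pow_le (k n : ℕ) :
    (((k + 1) * (n / 4 ^ (k + 1)) : ℕ) : ℝ) ≤ n / 2 ^ (k + 2) := by
  push_cast
  calc ((k : ℝ) + 1) * ((n / 4 ^ (k + 1) : ℕ) : ℝ) ≤ 2 ^ k * (n / 4 ^ (k + 1)) := by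
        gcongr
        · exact_mod_cast Nat.lt_two_pow_self
        · exact_mod_cast Nat.cast_div_le
    _ = n / 2 ^ (k + 2) := by
        rw [show (4 : ℝ) = 2 ^ 2 by norm_num, ← pow_mul]
        field_simp
        ring

theorem Dn_le_of_forall_Dkn_le {δ τ : ℝ} {n : ℕ} {x : ℝ}
    (h : ∀ k, Dkn δ τ (k + 1) n x ≤ n / 2 ^ (k + 3)) : Dn δ τ n x ≤ n / 4 := by
  have h' : ∀ k : ℕ, Dkn δ τ (k + 1) n x ≤ n / 4 / 2 / 2 ^ k := fun k =>
    (h k).trans_eq (by rw [pow_add]; ring)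
  have hsum := summable_geometric_two' (n / 4 : ℝ)
  calc Dn δ τ n x ≤ ∑' k : ℕ, (n : ℝ) / 4 / 2 / 2 ^ k :=
        Summable.tsum_le_tsum h' (hsum.of_nonneg_of_le (fun k => by rw [Dkn_eq_card]; positivity)
          h') hsum
    _ = n / 4 := tsum_geometric_two' _

theorem setOf_le_Dn_subset_iUnion {δ τ : ℝ} {n : ℕ} (hn : 1 ≤ n) :
    {x ∈ Ioo (-(1 / 2) : ℝ) (1 / 2) | (n : ℝ) / 2 ≤ Dn δ τ n x} ⊆
      ⋃ k : ℕ, {x ∈ Ioo (-(1 / 2) : ℝ) (1 / 2) |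
        (((k + 2) * (n / 4 ^ (k + 2)) : ℕ) : ℝ) < Dkn δ τ (k + 1) n x} := by
  rintro x ⟨hx, hD⟩
  by_contra hnot
  simp only [mem_iUnion, mem_ofPred_eq, not_exists, not_and, not_lt] at hnot
  have := Dn_le_of_forall_Dkn_le fun k => (hnot k hx).trans (natCast_mul_div_four_pow_le (k + 1) n)
  have hn' : (1 : ℝ) ≤ n := by exact_mod_cast hn
  linarith

theorem tsum_pow_succ_le_two_mul {x : ℝ} (h0 : 0 ≤ x) (h : x ≤ 1 / 2) :
    Summable (fun k : ℕ => x ^ (k + 1)) ∧ ∑' k : ℕ, x ^ (k + 1) ≤ 2 * x := by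
  have hgeom := summable_geometric_of_lt_one h0 (by linarith)
  refine ⟨by simpa [pow_succ'] using hgeom.mul_left x, ?_⟩
  simp only [pow_succ', tsum_mul_left, tsum_geometric_of_lt_one h0 (by linarith : x < 1)]
  rw [mul_comm 2 x]
  gcongr
  rw [inv_le_comm₀ (by linarith) (by norm_num)]
  linarith

theorem volume_lt_Dkn_le_pow {δ τ : ℝ} {b m : ℕ} (hb : 0 < b) (hmb : m ∣ b)
    (hδ : (b : ℝ) * δ = 1) (hτ : (m : ℝ) * δ = τ) (hτ0 : 0 ≤ τ) (hτ8 : τ ≤ 1 / 2 ^ 8) (k : ℕ)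
    {n : ℕ} (hn : 1 ≤ n) :
    volume {x ∈ Ioo (-(1 / 2) : ℝ) (1 / 2) |
      (((k + 2) * (n / 4 ^ (k + 2)) : ℕ) : ℝ) < Dkn δ τ (k + 1) n x}
        ≤ ENNReal.ofReal ((2 ^ 16 * τ) ^ (k + 1) / n ^ 2) := by
  refine (volume_lt_Dkn_le hb hmb hδ hτ (k + 1) n _).trans (ENNReal.ofReal_le_ofReal ?_)
  rw [le_div_iff₀ (by positivity), mul_comm]
  refine sq_mul_choose_mul_pow_le hτ0 hτ8 k.succ_ne_zero ?_
  rw [add_one_mul]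
  exact Nat.lt_div_mul_add (by positivity)

/-- There exist τ₀ ∈ (0,1) and C : (0,τ₀) → (0,∞) with C(τ) → 0 as
τ → 0, such that whenever τ ∈ (0,τ₀) and δ ∈ (0,1) satisfy 1/δ ∈ ℕ, 1/τ ∈ ℕ and
τ/δ ∈ ℕ, then for every n ≥ 1 the measure of E_n = {x ∈ I : D_n(x) ≥ n/2} is at
most C(τ)/n². -/
theorem statement14 :
    ∃ τ₀ ∈ Set.Ioo (0 : ℝ) 1, ∃ C : ℝ → ℝ,
      Filter.Tendsto C (nhdsWithin 0 (Set.Ioi 0)) (nhds 0) ∧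
      (∀ τ ∈ Set.Ioo (0 : ℝ) τ₀, 0 < C τ) ∧
      (∀ τ ∈ Set.Ioo (0 : ℝ) τ₀, ∀ δ ∈ Set.Ioo (0 : ℝ) 1,
        (∃ m : ℕ, (m : ℝ) * δ = 1) → (∃ m : ℕ, (m : ℝ) * τ = 1) →
        (∃ m : ℕ, (m : ℝ) * δ = τ) →
        ∀ n : ℕ, 1 ≤ n →
          volume {x ∈ Set.Ioo (-(1 / 2) : ℝ) (1 / 2) | (n : ℝ) / 2 ≤ Dn δ τ n x}
            ≤ ENNReal.ofReal (C τ / n ^ 2)) := by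
  refine ⟨1 / 2 ^ 17, ⟨by positivity, by norm_num⟩, fun τ => 2 ^ 17 * τ,
    tendsto_nhdsWithin_of_tendsto_nhds ?_, fun τ hτ => mul_pos (by positivity) hτ.1, ?_⟩
  · simpa using (continuous_const_mul (2 ^ 17 : ℝ)).tendsto 0
  rintro τ ⟨hτ0, hτ⟩ δ ⟨hδ0, -⟩ ⟨b, hb⟩ ⟨M, hM⟩ ⟨m, hm⟩ n hn
  have hbpos : 0 < b := Nat.pos_of_ne_zero fun h => by simp [h] at hb
  have hmb : m ∣ b := ⟨M, by
    have : (b : ℝ) * δ = (m * M : ℕ) * δ := by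
      rw [hb, Nat.cast_mul, mul_right_comm, hm, mul_comm, hM]
    exact_mod_cast mul_right_cancel₀ hδ0.ne' this⟩
  have hlevel := fun k => volume_lt_Dkn_le_pow hbpos hmb hb hm hτ0.le
    (hτ.le.trans (by norm_num)) k hn
  obtain ⟨hsum, hsum_le⟩ := tsum_pow_succ_le_two_mul (x := 2 ^ 16 * τ) (by positivity) (by
    rw [lt_div_iff₀ (by norm_num)] at hτ; linarith)
  calc volume {y ∈ Ioo (-(1 / 2) : ℝ) (1 / 2) | (n : ℝ) / 2 ≤ Dn δ τ n y}
      ≤ ∑' k : ℕ, ENNReal.ofReal ((2 ^ 16 * τ) ^ (k + 1) / n ^ 2) :=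
        (measure_mono (setOf_le_Dn_subset_iUnion hn)).trans <|
          (measure_iUnion_le _).trans (ENNReal.tsum_le_tsum hlevel)
    _ = ENNReal.ofReal ((∑' k : ℕ, (2 ^ 16 * τ) ^ (k + 1)) / n ^ 2) := by
        rw [← tsum_div_const, ENNReal.ofReal_tsum_of_nonneg (fun k => by positivity)
          (hsum.div_const _)]
    _ ≤ ENNReal.ofReal (2 ^ 17 * τ / n ^ 2) := by
        gcongr
        linarith
end

section
/- For every integer k ≥ 1 and all integers 1 ≤ i₁ ≤ i₂ ≤ i₃ ≤ i₄, if i₂ ≥ i₁ + k or i₄ ≥ i₃ + k, then ∫_I ξ^{(k)}_{i₁}(x)·ξ^{(k)}_{i₂}(x)·ξ^{(k)}_{i₃}(x)·ξ^{(k)}_{i₄}(x) dx = 0. -/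
open MeasureTheory

/-- ξ^{(k)}_i = ξ′^{(k)}_i − τ^k. -/
noncomputable def xiM (δ τ : ℝ) (k i : ℕ) (x : ℝ) : ℝ :=
  xiP δ τ k i x - τ ^ k

/-!
Cut `I` into cells of width `w = τ^k δ^{i₄} / 2`. For `i ≤ i₄`, `ξ_i` is constant on each open
cell, and on the `n`-th one it equals `1 - τ^k` or `-τ^k` according as `n mod 2R` lies in the
window `[R - S, R + S)` or not, where `2R w = δ^i` and `2S w = τ^k δ^i`; so the integral is `w`
times a sum over `n`. These sequences are periodic, and symmetric under `n ↦ 2R' - 1 - n` for the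
half-period `R'` of any coarser one; hence a product of them has the same sum over every
half-period of its coarsest factor. If `i₂ ≥ i₁ + k`, the window of `ξ_{i₁}` is aligned with the
half-periods of `ξ_{i₂}`, so `ξ_{i₁}` is constant on them and the sum is a multiple of the sum of
`ξ_{i₁}`, which vanishes because `S = τ^k R`. If `i₄ ≥ i₃ + k`, the first three factors are
constant on the half-periods of `ξ_{i₄}`, over each of which `ξ_{i₄}` sums to zero.
-/

open Finset

theorem sum_range_mul_eq_sum_sum (F : ℕ → ℝ) (r M : ℕ) :
    ∑ n ∈ range (M * r), F n = ∑ a ∈ range M, ∑ j ∈ range r, F (a * r + j) := by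
  induction M with
  | zero => simp
  | succ M ih => rw [add_one_mul, sum_range_add, ih, sum_range_succ]

theorem sum_range_mul_mul_eq_of_div_eq {f g : ℕ → ℝ} {r : ℕ} {c : ℝ} (M : ℕ)
    (hf : ∀ n m, n / r = m / r → f n = f m) (hg : ∀ a, ∑ j ∈ range r, g (a * r + j) = c) :
    ∑ n ∈ range (M * r), f n * g n = c * ∑ a ∈ range M, f (a * r) := by
  rw [sum_range_mul_eq_sum_sum, mul_sum]
  refine sum_congr rfl fun a _ => ?_
  calc ∑ j ∈ range r, f (a * r + j) * g (a * r + j)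
      = ∑ j ∈ range r, f (a * r) * g (a * r + j) := by
        refine sum_congr rfl fun j hj => ?_
        have hr : 0 < r := by have := mem_range.mp hj; omega
        rw [hf (a * r + j) (a * r) (by rw [add_comm, Nat.add_mul_div_right _ _ hr,
          Nat.mul_div_cancel _ hr, Nat.div_eq_of_lt (mem_range.mp hj), zero_add])]
    _ = c * f (a * r) := by rw [← mul_sum, hg, mul_comm]

theorem sum_block_eq_of_periodic_of_reflect {g : ℕ → ℝ} {r : ℕ}
    (hper : Function.Periodic g (2 * r)) (hrefl : ∀ n m, n + m + 1 = 2 * r → g n = g m) (a : ℕ) :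
    ∑ j ∈ range r, g (a * r + j) = ∑ j ∈ range r, g j := by
  obtain ⟨b, rfl | rfl⟩ := Nat.even_or_odd' a
  · refine sum_congr rfl fun j _ => ?_
    rw [show 2 * b * r + j = j + b * (2 * r) by ring]
    exact hper.nat_mul b j
  · calc ∑ j ∈ range r, g ((2 * b + 1) * r + j) = ∑ j ∈ range r, g (r - 1 - j) := by
          refine sum_congr rfl fun j hj => ?_
          rw [show (2 * b + 1) * r + j = r + j + b * (2 * r) by ring]
          exact (hper.nat_mul b _).trans (hrefl _ _ (by have := mem_range.mp hj; omega))
      _ = ∑ j ∈ range r, g j := sum_range_reflect g r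

noncomputable def centralIndicator (R S n : ℕ) : ℝ :=
  if R - S ≤ n % (2 * R) ∧ n % (2 * R) < R + S then 1 else 0

theorem centralIndicator_periodic (R S : ℕ) {R' : ℕ} (h : R ∣ R') :
    Function.Periodic (centralIndicator R S) (2 * R') := by
  obtain ⟨d, rfl⟩ := h
  intro n
  unfold centralIndicator
  rw [show n + 2 * (R * d) = n + 2 * R * d by ring, Nat.add_mul_mod_self_left]

theorem centralIndicator_reflect (R S : ℕ) {R' n m : ℕ} (h : R ∣ R') (hnm : n + m + 1 = 2 * R') :
    centralIndicator R S n = centralIndicator R S m := by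
  have hR : 0 < 2 * R := by
    rcases Nat.eq_zero_or_pos R with rfl | hR
    · obtain rfl := Nat.eq_zero_of_zero_dvd h; omega
    · omega
  have hdvd : 2 * R ∣ n % (2 * R) + m % (2 * R) + 1 := by
    refine (Nat.dvd_add_right (dvd_mul_right _ (n / (2 * R) + m / (2 * R)))).mp ?_
    rw [show 2 * R * (n / (2 * R) + m / (2 * R)) + (n % (2 * R) + m % (2 * R) + 1) = n + m + 1 by
      linarith [Nat.div_add_mod n (2 * R), Nat.div_add_mod m (2 * R)], hnm]
    exact mul_dvd_mul_left 2 h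
  obtain ⟨c, hc⟩ := hdvd
  have hn := Nat.mod_lt n hR
  have hm := Nat.mod_lt m hR
  have hc1 : c = 1 := by
    rcases c with _ | _ | c
    · omega
    · rfl
    · nlinarith
  subst hc1
  unfold centralIndicator
  exact if_congr (by omega) rfl rfl

theorem centralIndicator_eq_of_div_eq {R S r n m : ℕ} (hR : r ∣ R) (hS : r ∣ S)
    (h : n / r = m / r) : centralIndicator R S n = centralIndicator R S m := by
  obtain ⟨ρ, rfl⟩ := hR
  obtain ⟨σ, rfl⟩ := hS
  rcases Nat.eq_zero_or_pos r with rfl | hr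
  · simp [centralIndicator]
  have key : ∀ n, centralIndicator (r * ρ) (r * σ) n =
      if ρ - σ ≤ n / r % (2 * ρ) ∧ n / r % (2 * ρ) < ρ + σ then 1 else 0 := by
    intro n
    unfold centralIndicator
    refine if_congr ?_ rfl rfl
    rw [show 2 * (r * ρ) = r * (2 * ρ) by ring, ← Nat.mod_mul_right_div_self,
      Nat.le_div_iff_mul_le hr, Nat.div_lt_iff_lt_mul hr, ← Nat.mul_sub, ← Nat.mul_add,
      mul_comm r (2 * ρ), mul_comm r (ρ - σ), mul_comm r (ρ + σ)]
  rw [key, key, h]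

theorem sum_range_centralIndicator {R S : ℕ} (h : S ≤ R) :
    ∑ j ∈ range R, centralIndicator R S j = S := by
  have hfilter : (range R).filter (fun j => R - S ≤ j % (2 * R) ∧ j % (2 * R) < R + S) =
      Ico (R - S) R := by
    ext j
    simp only [mem_filter, mem_range, mem_Ico]
    constructor
    · rintro ⟨hj, h1, -⟩; rw [Nat.mod_eq_of_lt (by omega)] at h1; omega
    · rintro ⟨h1, hj⟩; rw [Nat.mod_eq_of_lt (by omega)]; omega
  unfold centralIndicator
  rw [sum_boole, hfilter, Nat.card_Ico, Nat.sub_sub_self h]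

-- On the `n`-th cell of width `τ^k δ^j / 2`, `ξ_i` equals `discreteXi b A (j - i) n`
-- with `b = τ^{-k}` and `A = δ^{-1}`.
noncomputable def discreteXi (b A d n : ℕ) : ℝ :=
  centralIndicator (b * A ^ d) (A ^ d) n - (b : ℝ)⁻¹

section DiscreteXi

variable {b A k d e : ℕ}

theorem discreteXi_periodic (hed : e ≤ d) :
    Function.Periodic (discreteXi b A e) (2 * (b * A ^ d)) := fun n => by
  simp only [discreteXi, centralIndicator_periodic _ _ (mul_dvd_mul_left b (pow_dvd_pow A hed)) n]

theorem discreteXi_reflect (hed : e ≤ d) {n m : ℕ} (hnm : n + m + 1 = 2 * (b * A ^ d)) :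
    discreteXi b A e n = discreteXi b A e m := by
  simp only [discreteXi,
    centralIndicator_reflect _ _ (mul_dvd_mul_left b (pow_dvd_pow A hed)) hnm]

theorem discreteXi_eq_of_div_eq (hb : b ∣ A ^ k) (hed : e + k ≤ d) {n m : ℕ}
    (h : n / (b * A ^ e) = m / (b * A ^ e)) : discreteXi b A d n = discreteXi b A d m := by
  have hS : b * A ^ e ∣ A ^ d :=
    (mul_dvd_mul hb (dvd_refl _)).trans (by rw [← pow_add]; exact pow_dvd_pow A (by omega))
  simp only [discreteXi,
    centralIndicator_eq_of_div_eq (hS.trans (dvd_mul_left _ b)) hS h]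

theorem sum_block_discreteXi (hb : 0 < b) (d a : ℕ) :
    ∑ j ∈ range (b * A ^ d), discreteXi b A d (a * (b * A ^ d) + j) = 0 := by
  rw [sum_block_eq_of_periodic_of_reflect (discreteXi_periodic le_rfl)
    fun _ _ => discreteXi_reflect le_rfl]
  simp only [discreteXi]
  rw [sum_sub_distrib, sum_range_centralIndicator (Nat.le_mul_of_pos_left _ hb), sum_const,
    card_range, nsmul_eq_mul]
  push_cast
  field_simp
  ring

theorem sum_range_discreteXi (hb : 0 < b) (d q : ℕ) :
    ∑ n ∈ range (q * (b * A ^ d)), discreteXi b A d n = 0 := by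
  rw [sum_range_mul_eq_sum_sum]
  exact sum_eq_zero fun a _ => sum_block_discreteXi hb d a

end DiscreteXi

theorem sum_discreteXi_mul_eq_zero {b A k d₁ d₂ d₃ d₄ : ℕ} (hA : 0 < A) (hb : b ∣ A ^ k)
    (h12 : d₂ ≤ d₁) (h23 : d₃ ≤ d₂) (h34 : d₄ ≤ d₃) (hcond : d₂ + k ≤ d₁ ∨ d₄ + k ≤ d₃) (q : ℕ) :
    ∑ n ∈ range (q * (b * A ^ d₁)),
      discreteXi b A d₁ n * discreteXi b A d₂ n * discreteXi b A d₃ n * discreteXi b A d₄ n =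
        0 := by
  have hb0 : 0 < b := Nat.pos_of_dvd_of_pos hb (pow_pos hA k)
  have hlen : ∀ e ≤ d₁, q * (b * A ^ d₁) = q * A ^ (d₁ - e) * (b * A ^ e) := fun e he => by
    conv_lhs => rw [← Nat.sub_add_cancel he, pow_add]
    ring
  rcases hcond with hc | hc
  · have hf : ∀ n m, n / (b * A ^ d₂) = m / (b * A ^ d₂) →
        discreteXi b A d₁ n = discreteXi b A d₁ m := fun n m h => discreteXi_eq_of_div_eq hb hc h
    have hmean : ∑ a ∈ range (q * A ^ (d₁ - d₂)), discreteXi b A d₁ (a * (b * A ^ d₂)) = 0 := by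
      have h := sum_range_mul_mul_eq_of_div_eq (g := 1) (c := ((b * A ^ d₂ : ℕ) : ℝ))
        (q * A ^ (d₁ - d₂)) hf fun a => by simp
      simp only [Pi.one_apply, mul_one] at h
      rw [← hlen d₂ h12, sum_range_discreteXi hb0] at h
      exact (mul_eq_zero.mp h.symm).resolve_left (by positivity)
    have hper : Function.Periodic
        (fun n => discreteXi b A d₂ n * (discreteXi b A d₃ n * discreteXi b A d₄ n))
        (2 * (b * A ^ d₂)) :=
      (discreteXi_periodic le_rfl).mul
        ((discreteXi_periodic h23).mul (discreteXi_periodic (h34.trans h23)))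
    have hrefl : ∀ n m, n + m + 1 = 2 * (b * A ^ d₂) →
        discreteXi b A d₂ n * (discreteXi b A d₃ n * discreteXi b A d₄ n) =
          discreteXi b A d₂ m * (discreteXi b A d₃ m * discreteXi b A d₄ m) := fun n m h => by
      rw [discreteXi_reflect le_rfl h, discreteXi_reflect h23 h,
        discreteXi_reflect (h34.trans h23) h]
    simp only [mul_assoc]
    rw [hlen d₂ h12, sum_range_mul_mul_eq_of_div_eq _ hf
      (sum_block_eq_of_periodic_of_reflect hper hrefl), hmean, mul_zero]
  · have hf : ∀ n m, n / (b * A ^ d₄) = m / (b * A ^ d₄) →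
        discreteXi b A d₁ n * discreteXi b A d₂ n * discreteXi b A d₃ n =
          discreteXi b A d₁ m * discreteXi b A d₂ m * discreteXi b A d₃ m := fun n m h => by
      rw [discreteXi_eq_of_div_eq hb (by omega) h, discreteXi_eq_of_div_eq hb (by omega) h,
        discreteXi_eq_of_div_eq hb hc h]
    rw [hlen d₄ (by omega), sum_range_mul_mul_eq_of_div_eq _ hf (sum_block_discreteXi hb0 d₄),
      zero_mul]

theorem abs_sub_natCast_lt_natCast_iff {z : ℝ} {m R S : ℕ} (hz : z ∈ Set.Ioo (m : ℝ) (m + 1)) :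
    |z - R| < S ↔ R - S ≤ m ∧ m < R + S := by
  obtain ⟨hm, hm'⟩ := hz
  rw [abs_lt]
  constructor
  · rintro ⟨h₁, h₂⟩
    have hR : R < m + 1 + S := by exact_mod_cast (by linarith : (R : ℝ) < m + 1 + S)
    have hm : m < R + S := by exact_mod_cast (by linarith : (m : ℝ) < R + S)
    omega
  · rintro ⟨h₁, h₂⟩
    have hR : (R : ℝ) ≤ m + S := by exact_mod_cast (by omega : R ≤ m + S)
    have hm : (m : ℝ) + 1 ≤ R + S := by exact_mod_cast (by omega : m + 1 ≤ R + S)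
    constructor <;> linarith

theorem xiP_eq_centralIndicator {δ τ w x : ℝ} {k i R S n : ℕ} (hw : 0 < w) (hR0 : 0 < R)
    (hR : 2 * R * w = δ ^ i) (hS : 2 * S * w = τ ^ k * δ ^ i)
    (hx : x ∈ Set.Ioo (-(1 / 2) + n * w) (-(1 / 2) + (n + 1) * w)) :
    xiP δ τ k i x = centralIndicator R S n := by
  obtain ⟨hx₁, hx₂⟩ := hx
  set q := n / (2 * R)
  set m := n % (2 * R)
  have hn : (n : ℝ) = 2 * R * q + m := by exact_mod_cast (Nat.div_add_mod n (2 * R)).symm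
  have hm : (m : ℝ) + 1 ≤ 2 * R := by exact_mod_cast Nat.mod_lt n (by omega : 0 < 2 * R)
  have hfloor : ⌊(x + 1 / 2) / δ ^ i⌋ = q := by
    rw [Int.floor_eq_iff, ← hR, le_div_iff₀ (by positivity), div_lt_iff₀ (by positivity)]
    push_cast
    constructor <;> nlinarith [mul_nonneg (Nat.cast_nonneg m : (0 : ℝ) ≤ m) hw.le]
  have hz : (x + 1 / 2) / w - 2 * R * q ∈ Set.Ioo (m : ℝ) (m + 1) := by
    rw [Set.mem_Ioo, lt_sub_iff_add_lt, sub_lt_iff_lt_add, lt_div_iff₀ hw, div_lt_iff₀ hw]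
    constructor <;> nlinarith
  have hdist : x - ctr δ i x = ((x + 1 / 2) / w - 2 * R * q - R) * w := by
    rw [ctr, hfloor, ← hR]
    field_simp
    push_cast
    ring
  unfold xiP centralIndicator
  refine if_congr ?_ rfl rfl
  rw [hdist, show τ ^ k * δ ^ i / 2 = S * w by linarith, abs_mul, abs_of_pos hw,
    mul_lt_mul_iff_left₀ hw]
  exact abs_sub_natCast_lt_natCast_iff hz

theorem integral_Ioo_eq_sum_of_eqOn {F : ℝ → ℝ} {v : ℕ → ℝ} {a w : ℝ} {N : ℕ} (hw : 0 < w)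
    (hF : ∀ n < N, Set.EqOn F (fun _ => v n) (Set.Ioo (a + n * w) (a + (n + 1) * w))) :
    ∫ x in Set.Ioo a (a + N * w), F x = (∑ n ∈ range N, v n) * w := by
  set t : ℕ → ℝ := fun n => a + n * w
  have ht : ∀ n : ℕ, t n ≤ t (n + 1) := fun n => by simp only [t]; push_cast; linarith
  have hF' : ∀ n < N, Set.EqOn F (fun _ => v n) (Set.Ioo (t n) (t (n + 1))) := fun n hn => by
    simpa [t] using hF n hn
  have hpiece : ∀ n < N, ∫ x in Set.Ioo (t n) (t (n + 1)), F x = v n * w := fun n hn => by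
    rw [setIntegral_congr_fun measurableSet_Ioo (hF' n hn), setIntegral_const,
      Real.volume_real_Ioo_of_le (ht n), smul_eq_mul, mul_comm]
    simp only [t]; push_cast; ring
  have hint : ∀ n < N, IntervalIntegrable F volume (t n) (t (n + 1)) := fun n hn => by
    rw [intervalIntegrable_iff_integrableOn_Ioo_of_le (ht n)]
    exact (integrableOn_const (C := v n) (by simp)).congr_fun
      (fun x hx => (hF' n hn hx).symm) measurableSet_Ioo
  have hsum := intervalIntegral.sum_integral_adjacent_intervals hint
  simp only [intervalIntegral.integral_of_le (ht _), integral_Ioc_eq_integral_Ioo] at hsum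
  have h0N : t 0 ≤ t N := by simp only [t, Nat.cast_zero, zero_mul, add_zero]; nlinarith
  rw [sum_mul, ← sum_congr rfl fun n hn => hpiece n (mem_range.mp hn), hsum,
    intervalIntegral.integral_of_le h0N, integral_Ioc_eq_integral_Ioo]
  simp [t]

theorem pos_of_natCast_mul_eq_one {N : ℕ} {x : ℝ} (h : N * x = 1) : 0 < x :=
  pos_of_mul_pos_right (h ▸ one_pos) N.cast_nonneg

theorem xiM_eq_discreteXi {δ τ x : ℝ} {A b k i j n : ℕ} (hA : A * δ = 1) (hb : b * τ ^ k = 1)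
    (hij : i ≤ j) (hx : x ∈ Set.Ioo (-(1 / 2) + n * (τ ^ k * δ ^ j / 2))
      (-(1 / 2) + (n + 1) * (τ ^ k * δ ^ j / 2))) :
    xiM δ τ k i x = discreteXi b A (j - i) n := by
  have hδ := pos_of_natCast_mul_eq_one hA
  have hτ := pos_of_natCast_mul_eq_one hb
  have hb0 : 0 < b := Nat.pos_of_ne_zero (by rintro rfl; simp at hb)
  have hA0 : 0 < A := Nat.pos_of_ne_zero (by rintro rfl; simp at hA)
  have hscale : (A : ℝ) ^ (j - i) * δ ^ j = δ ^ i := by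
    rw [← pow_sub_mul_pow δ hij, ← mul_assoc, ← mul_pow, hA, one_pow, one_mul]
  rw [xiM, discreteXi, xiP_eq_centralIndicator (R := b * A ^ (j - i)) (S := A ^ (j - i))
    (by positivity) (by positivity) _ _ hx, eq_inv_of_mul_eq_one_right hb]
  · push_cast
    linear_combination (A : ℝ) ^ (j - i) * δ ^ j * hb + hscale
  · push_cast
    linear_combination τ ^ k * hscale

theorem statement16_general (δ τ : ℝ)
    (hδint : ∃ m : ℕ, (m : ℝ) * δ = 1) (hτint : ∃ m : ℕ, (m : ℝ) * τ = 1)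
    (hτδ : ∃ m : ℕ, (m : ℝ) * δ = τ)
    (k i₁ i₂ i₃ i₄ : ℕ) (h12 : i₁ ≤ i₂) (h23 : i₂ ≤ i₃)
    (h34 : i₃ ≤ i₄) (hcond : i₁ + k ≤ i₂ ∨ i₃ + k ≤ i₄) :
    ∫ x in Set.Ioo (-(1 / 2) : ℝ) (1 / 2),
      xiM δ τ k i₁ x * xiM δ τ k i₂ x * xiM δ τ k i₃ x * xiM δ τ k i₄ x = 0 := by
  obtain ⟨A, hA⟩ := hδint
  obtain ⟨B, hB⟩ := hτint
  obtain ⟨E, hE⟩ := hτδ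
  have hA0 : 0 < A := Nat.pos_of_ne_zero (by rintro rfl; simp at hA)
  have hAB : A = B * E := by
    have h : ((B * E : ℕ) : ℝ) * δ = A * δ := by push_cast; rw [mul_assoc, hE, hB, hA]
    exact_mod_cast (mul_right_cancel₀ (pos_of_natCast_mul_eq_one hA).ne' h).symm
  have hb : ((B ^ k : ℕ) : ℝ) * τ ^ k = 1 := by push_cast; rw [← mul_pow, hB, one_pow]
  set w := τ ^ k * δ ^ i₄ / 2
  have hN : ((2 * A ^ i₁ * (B ^ k * A ^ (i₄ - i₁)) : ℕ) : ℝ) * w = 1 := by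
    have hAi : (A : ℝ) ^ i₁ * A ^ (i₄ - i₁) = A ^ i₄ := pow_mul_pow_sub _ (by omega)
    have hAδ : (A : ℝ) ^ i₄ * δ ^ i₄ = 1 := by rw [← mul_pow, hA, one_pow]
    push_cast at hb ⊢
    linear_combination (A : ℝ) ^ i₁ * A ^ (i₄ - i₁) * δ ^ i₄ * hb + δ ^ i₄ * hAi + hAδ
  have hxi : ∀ i ≤ i₄, ∀ (n : ℕ), ∀ x ∈ Set.Ioo (-(1 / 2) + n * w) (-(1 / 2) + (n + 1) * w),
      xiM δ τ k i x = discreteXi (B ^ k) A (i₄ - i) n := fun i hi n x hx =>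
    xiM_eq_discreteXi hA hb hi hx
  have hI : Set.Ioo (-(1 / 2) : ℝ) (1 / 2) =
      Set.Ioo (-(1 / 2)) (-(1 / 2) + ((2 * A ^ i₁ * (B ^ k * A ^ (i₄ - i₁)) : ℕ) : ℝ) * w) := by
    rw [hN]; norm_num
  rw [hI, integral_Ioo_eq_sum_of_eqOn (pos_of_natCast_mul_eq_one hN) fun n _ x hx => by
      rw [hxi i₁ (by omega) n x hx, hxi i₂ (by omega) n x hx, hxi i₃ h34 n x hx,
        hxi i₄ le_rfl n x hx],
    sum_discreteXi_mul_eq_zero hA0 (pow_dvd_pow_of_dvd (hAB ▸ dvd_mul_right B E) k)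
      (by omega) (by omega) (by omega) (by omega), zero_mul]

/-- For every k ≥ 1 and 1 ≤ i₁ ≤ i₂ ≤ i₃ ≤ i₄ with i₂ ≥ i₁ + k or
i₄ ≥ i₃ + k, the integral over I of ξ^{(k)}_{i₁}·ξ^{(k)}_{i₂}·ξ^{(k)}_{i₃}·ξ^{(k)}_{i₄}
vanishes. -/
theorem statement16 (δ τ : ℝ) (hδ : δ ∈ Set.Ioo (0 : ℝ) 1) (hτ : τ ∈ Set.Ioo (0 : ℝ) 1)
    (hδint : ∃ m : ℕ, (m : ℝ) * δ = 1) (hτint : ∃ m : ℕ, (m : ℝ) * τ = 1)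
    (hτδ : ∃ m : ℕ, (m : ℝ) * δ = τ)
    (k i₁ i₂ i₃ i₄ : ℕ) (hk : 1 ≤ k) (hi₁ : 1 ≤ i₁) (h12 : i₁ ≤ i₂) (h23 : i₂ ≤ i₃)
    (h34 : i₃ ≤ i₄) (hcond : i₁ + k ≤ i₂ ∨ i₃ + k ≤ i₄) :
    ∫ x in Set.Ioo (-(1 / 2) : ℝ) (1 / 2),
      xiM δ τ k i₁ x * xiM δ τ k i₂ x * xiM δ τ k i₃ x * xiM δ τ k i₄ x = 0 :=
  statement16_general δ τ hδint hτint hτδ k i₁ i₂ i₃ i₄ h12 h23 h34 hcond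
end

section
/- Let h : ℝ → ℂ and let h_n : ℝ → ℂ (n ∈ ℕ) be differentiable functions. Suppose there are constants C₁, C₂ > 0, η₁ ∈ (0,1) and R > 1 such that |h_n(x) − h(x)| ≤ C₁·η₁^n and |h_n′(x)| ≤ C₂·R^n for all x ∈ ℝ and all n ∈ ℕ. Then there is C > 0 such that |h(x) − h(y)| ≤ C·|x−y|^r for all x, y ∈ ℝ with |x − y| ≤ 1, where r = (log η₁)/(log(η₁/R)) ∈ (0,1). -/
/-!
Put `q = η₁ / R` and `r = log η₁ / log q`, so that `η₁ = q ^ r` and `R = q ^ (r - 1)`: at scale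
`δ = q ^ n` the function `hn n` approximates `h` to within `C₁ δ ^ r` and is `C₂ δ ^ (r - 1)`-Lipschitz.
Given `0 < |x - y| ≤ 1`, choose the scale with `q |x - y| ≤ δ ≤ |x - y|`; then both approximation
errors and the variation of `hn n` between `x` and `y` are `O(|x - y| ^ r)`.
-/

open Real Set

theorem logb_mem_Ioo_of_base_lt {q η : ℝ} (hq : 0 < q) (hqη : q < η) (hη : η < 1) :
    logb q η ∈ Ioo 0 1 := by
  have hq₁ : q < 1 := hqη.trans hη
  have hη₀ : 0 < η := hq.trans hqη
  refine ⟨logb_pos_of_base_lt_one hq hq₁ hη₀ hη, ?_⟩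
  rwa [logb_lt_iff_lt_rpow_of_base_lt_one hq hq₁ hη₀, rpow_one]

theorem norm_sub_le_mul_rpow_of_approx {E : Type*} [NormedAddCommGroup E]
    {f : ℝ → E} {g : ℕ → ℝ → E} {q r A B : ℝ} (hq₀ : 0 < q) (hq₁ : q < 1) (hr : 0 ≤ r)
    (hA : 0 ≤ A) (hB : 0 ≤ B)
    (happrox : ∀ n x, ‖g n x - f x‖ ≤ A * (q ^ n) ^ r)
    (hlip : ∀ n x y, ‖g n x - g n y‖ ≤ B * (q ^ n) ^ (r - 1) * |x - y|)
    {x y : ℝ} (hxy : |x - y| ≤ 1) :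
    ‖f x - f y‖ ≤ (2 * A + B / q) * |x - y| ^ r := by
  rcases eq_or_ne x y with rfl | hne
  · simp only [sub_self, norm_zero]
    positivity
  set t := |x - y|
  have ht : 0 < t := abs_pos.2 (sub_ne_zero.2 hne)
  obtain ⟨m, hδt, htq⟩ := exists_nat_pow_near_of_lt_one ht hxy hq₀ hq₁
  set δ := q ^ (m + 1) with hδ_def
  have hδ : 0 < δ := by positivity
  have hqt : q * t ≤ δ := by
    rw [hδ_def, pow_succ']
    gcongr
  have hδr : δ ^ r ≤ t ^ r := rpow_le_rpow hδ.le hδt.le hr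
  have hvar : δ ^ (r - 1) * t ≤ t ^ r / q := by
    rw [rpow_sub_one hδ.ne', div_mul_eq_mul_div, div_le_div_iff₀ hδ hq₀, mul_assoc, mul_comm t]
    gcongr
  calc ‖f x - f y‖
        = ‖(f x - g (m + 1) x) + (g (m + 1) x - g (m + 1) y) + (g (m + 1) y - f y)‖ := by
          congr 1; abel
    _ ≤ ‖f x - g (m + 1) x‖ + ‖g (m + 1) x - g (m + 1) y‖ + ‖g (m + 1) y - f y‖ := norm_add₃_le
    _ ≤ A * δ ^ r + B * δ ^ (r - 1) * t + A * δ ^ r := by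
        rw [norm_sub_rev (f x)]
        gcongr
        exacts [happrox _ x, hlip _ x y, happrox _ y]
    _ ≤ A * t ^ r + B * (t ^ r / q) + A * t ^ r := by
        rw [mul_assoc B]
        gcongr
    _ = (2 * A + B / q) * t ^ r := by ring

/-- If differentiable functions h_n converge to h with
|h_n(x) − h(x)| ≤ C₁·η₁^n and |h_n′(x)| ≤ C₂·R^n (η₁ ∈ (0,1), R > 1), then h is
Hölder with exponent r = log η₁ / log(η₁/R) ∈ (0,1) on pairs of points at distance
at most 1. -/
theorem statement17 (h : ℝ → ℂ) (hn : ℕ → ℝ → ℂ) (C₁ C₂ η₁ R : ℝ)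
    (hC₁ : 0 < C₁) (hC₂ : 0 < C₂) (hη₁ : η₁ ∈ Set.Ioo (0 : ℝ) 1) (hR : 1 < R)
    (hdiff : ∀ n : ℕ, ∀ x : ℝ, DifferentiableAt ℝ (hn n) x)
    (happrox : ∀ n : ℕ, ∀ x : ℝ, ‖hn n x - h x‖ ≤ C₁ * η₁ ^ n)
    (hderiv : ∀ n : ℕ, ∀ x : ℝ, ‖deriv (hn n) x‖ ≤ C₂ * R ^ n) :
    Real.log η₁ / Real.log (η₁ / R) ∈ Set.Ioo (0 : ℝ) 1 ∧
    ∃ C > (0 : ℝ), ∀ x y : ℝ, |x - y| ≤ 1 →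
      ‖h x - h y‖ ≤ C * |x - y| ^ (Real.log η₁ / Real.log (η₁ / R)) := by
  obtain ⟨hη₀, hη₁⟩ := hη₁
  set q := η₁ / R
  have hq₀ : 0 < q := by positivity
  have hqη : q < η₁ := div_lt_self hη₀ hR
  have hq₁ : q < 1 := hqη.trans hη₁
  have hqr : q ^ logb q η₁ = η₁ := rpow_logb hq₀ hq₁.ne hη₀
  have hr := logb_mem_Ioo_of_base_lt hq₀ hqη hη₁
  refine ⟨hr, 2 * C₁ + C₂ / q, by positivity, fun x y hxy ↦
    norm_sub_le_mul_rpow_of_approx (g := hn) hq₀ hq₁ hr.1.le hC₁.le hC₂.le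
      (fun n x ↦ ?_) (fun n x y ↦ ?_) hxy⟩
  · rw [← rpow_pow_comm hq₀.le, hqr]
    exact happrox n x
  · have hRn : (q ^ n) ^ (logb q η₁ - 1) = R ^ n := by
      rw [← rpow_pow_comm hq₀.le, rpow_sub_one hq₀.ne', hqr, div_div_cancel₀ hη₀.ne']
    rw [hRn, ← Real.norm_eq_abs]
    exact convex_univ.norm_image_sub_le_of_norm_deriv_le (fun z _ ↦ hdiff n z)
      (fun z _ ↦ hderiv n z) (mem_univ y) (mem_univ x)
end

section
/- Let α ∈ (0,1) and let f : ℝ → ℂ be a bounded measurable function with ∫_ℝ |f(x)|/(1+|x|^{1−α}) dx < ∞. Then for every t ∈ ℝ the integral (U_α f)(t) = ∫_ℝ f(x)·|t−x|^{α−1} dx converges absolutely, and there is a constant C depending only on α such that |(U_α f)(s) − (U_α f)(t)| ≤ C·(sup_ℝ |f|)·|s−t|^α for all s, t ∈ ℝ; in particular U_α f satisfies Hölder's condition with exponent α. -/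
/-!
After the substitution `x = t + (s - t) y`, the kernel difference
`|s - x| ^ (α - 1) - |t - x| ^ (α - 1)` becomes `|s - t| ^ (α - 1)` times the fixed function
`|1 - y| ^ (α - 1) - |y| ^ (α - 1)`. That function is integrable: near its singularities because
`α - 1 > -1`, and at infinity because, by the mean value theorem, it decays like `|y| ^ (α - 2)`.
Hence the kernel difference has `L¹` norm `C |s - t| ^ α`, with `C` the `L¹` norm of the fixed
function, and bounding `f` by its supremum gives the Hölder estimate. The same bound reduces
absolute convergence at `t` to the case `t = 0`. There the weight `1 / (1 + |x| ^ (1 - α))`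
controls the tail and the boundedness of `f` controls the singularity.
-/

open MeasureTheory Filter Real

namespace RieszPotential

lemma locallyIntegrable_abs_rpow {β : ℝ} (hβ : -1 < β) :
    LocallyIntegrable (fun y : ℝ => |y| ^ β) := by
  refine locallyIntegrable_of_norm_le_rpow (μ := volume) (C := 1) (α := -β) (by simp)
    (by simp only [Module.finrank_self, Nat.cast_one]; linarith) (ae_of_all _ fun y => ?_)
    (by fun_prop : Measurable _).aestronglyMeasurable
  simp [abs_of_nonneg (rpow_nonneg (abs_nonneg y) β)]

lemma locallyIntegrable_abs_sub_rpow {β : ℝ} (hβ : -1 < β) (c : ℝ) :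
    LocallyIntegrable (fun y : ℝ => |c - y| ^ β) :=
  (locallyIntegrable_map_homeomorph (Homeomorph.subLeft c) (f := fun y : ℝ => |y| ^ β)
    (μ := volume)).1
    (by rw [Homeomorph.coe_subLeft, Measure.map_sub_left_eq_self]
        exact locallyIntegrable_abs_rpow hβ)

lemma abs_rpow_sub_rpow_le {β : ℝ} (hβ : β ≤ 1) {m a b : ℝ} (hm : 0 < m) (ha : m ≤ a)
    (hb : m ≤ b) : |a ^ β - b ^ β| ≤ |β| * m ^ (β - 1) * |a - b| := by
  have hderiv : ∀ x ∈ Set.Ici m, HasDerivWithinAt (· ^ β) (β * x ^ (β - 1)) (Set.Ici m) x :=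
    fun x hx => (hasDerivAt_rpow_const (Or.inl (hm.trans_le hx).ne')).hasDerivWithinAt
  have hbound : ∀ x ∈ Set.Ici m, ‖β * x ^ (β - 1)‖ ≤ |β| * m ^ (β - 1) := fun x hx => by
    rw [norm_mul, norm_eq_abs, norm_eq_abs, abs_of_nonneg (rpow_nonneg (hm.le.trans hx) _)]
    exact mul_le_mul_of_nonneg_left (rpow_le_rpow_of_nonpos hm hx (by linarith)) (abs_nonneg β)
  simpa [norm_eq_abs] using
    (convex_Ici m).norm_image_sub_le_of_norm_hasDerivWithin_le hderiv hbound hb ha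

lemma abs_one_sub_rpow_sub_rpow_le {β : ℝ} (hβ : β ≤ 1) {y : ℝ} (hy : 2 ≤ |y|) :
    |(|1 - y| ^ β - |y| ^ β)| ≤ |β| * 4 ^ (1 - β) * (1 + |y|) ^ (β - 1) := by
  have h1y : |y| / 2 ≤ |1 - y| := by
    have := abs_sub_abs_le_abs_sub y 1
    rw [abs_sub_comm y 1, abs_one] at this
    linarith
  have hdist : |(|1 - y| - |y|)| ≤ 1 := by
    have := abs_abs_sub_abs_le_abs_sub (1 - y) (-y)
    rwa [abs_neg, sub_neg_eq_add, sub_add_cancel, abs_one] at this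
  calc |(|1 - y| ^ β - |y| ^ β)| ≤ |β| * (|y| / 2) ^ (β - 1) * 1 := by
        refine (abs_rpow_sub_rpow_le hβ (by linarith) h1y (by linarith)).trans ?_
        gcongr
    _ ≤ |β| * ((1 + |y|) / 4) ^ (β - 1) := by
        rw [mul_one]
        gcongr |β| * ?_
        exact rpow_le_rpow_of_nonpos (by positivity) (by linarith) (by linarith)
    _ = |β| * 4 ^ (1 - β) * (1 + |y|) ^ (β - 1) := by
        rw [div_rpow (by positivity) (by norm_num), div_eq_mul_inv, ← rpow_neg (by norm_num),
          neg_sub]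
        ring

lemma integrable_abs_one_sub_rpow_sub_rpow {β : ℝ} (hβ : -1 < β) (hβ0 : β < 0) :
    Integrable (fun y : ℝ => |1 - y| ^ β - |y| ^ β) := by
  refine ((locallyIntegrable_abs_sub_rpow hβ 1).sub (locallyIntegrable_abs_rpow hβ))
    |>.integrable_of_isBigO_cocompact (g := fun y : ℝ => (1 + ‖y‖) ^ (-(1 - β))) ?_
    ((integrable_one_add_norm
      (by simp only [Module.finrank_self, Nat.cast_one]; linarith)).integrableAtFilter _)
  refine Asymptotics.IsBigO.of_bound (|β| * 4 ^ (1 - β)) ?_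
  filter_upwards [tendsto_norm_cocompact_atTop.eventually (eventually_ge_atTop 2)] with y hy
  simp only [norm_eq_abs, neg_sub] at hy ⊢
  rw [abs_of_nonneg (rpow_nonneg (by positivity) _)]
  exact abs_one_sub_rpow_sub_rpow_le (by linarith) hy

lemma abs_sub_rpow_sub_rpow_eq (β : ℝ) {s t : ℝ} (hst : s ≠ t) (x : ℝ) :
    |s - x| ^ β - |t - x| ^ β
      = |s - t| ^ β * (|1 - (x - t) / (s - t)| ^ β - |(x - t) / (s - t)| ^ β) := by
  have hs : s - x = (s - t) * (1 - (x - t) / (s - t)) := by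
    field_simp [sub_ne_zero.mpr hst]; ring
  have ht : t - x = -((s - t) * ((x - t) / (s - t))) := by
    field_simp [sub_ne_zero.mpr hst]; ring
  rw [hs, ht, abs_neg, abs_mul, abs_mul, mul_rpow (abs_nonneg _) (abs_nonneg _),
    mul_rpow (abs_nonneg _) (abs_nonneg _), mul_sub]

lemma integrable_abs_sub_rpow_sub_rpow {β : ℝ} (hβ : -1 < β) (hβ0 : β < 0) (s t : ℝ) :
    Integrable (fun x : ℝ => |s - x| ^ β - |t - x| ^ β) := by
  rcases eq_or_ne s t with rfl | hst
  · simp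
  simp_rw [abs_sub_rpow_sub_rpow_eq β hst]
  exact (((integrable_abs_one_sub_rpow_sub_rpow hβ hβ0).comp_div
    (sub_ne_zero.mpr hst)).comp_sub_right t).const_mul _

lemma integral_abs_sub_rpow_sub_rpow {β : ℝ} (hβ : β ≠ -1) (s t : ℝ) :
    ∫ x : ℝ, |(|s - x| ^ β - |t - x| ^ β)|
      = |s - t| ^ (β + 1) * ∫ y : ℝ, |(|1 - y| ^ β - |y| ^ β)| := by
  rcases eq_or_ne s t with rfl | hst
  · simp [zero_rpow (show β + 1 ≠ 0 by contrapose! hβ; linarith)]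
  simp_rw [abs_sub_rpow_sub_rpow_eq β hst, abs_mul, abs_of_nonneg (rpow_nonneg (abs_nonneg _) _)]
  rw [integral_const_mul,
    integral_sub_right_eq_self (fun x => |(|1 - x / (s - t)| ^ β - |x / (s - t)| ^ β)|) t,
    Measure.integral_comp_div (fun y => |(|1 - y| ^ β - |y| ^ β)|), smul_eq_mul,
    rpow_add_one (abs_ne_zero.mpr (sub_ne_zero.mpr hst)), mul_assoc]

section Potential

variable {f : ℝ → ℂ} {M β : ℝ}

lemma integrable_mul_abs_rpow (hβ : -1 < β) (hβ0 : β ≤ 0) (hf : AEStronglyMeasurable f)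
    (hM : ∀ x, ‖f x‖ ≤ M) (hw : Integrable (fun x : ℝ => ‖f x‖ / (1 + |x| ^ (-β)))) :
    Integrable (fun x : ℝ => f x * ((|x| ^ β : ℝ) : ℂ)) := by
  have hnear : Integrable ((Set.Icc (-1 : ℝ) 1).indicator fun x => |x| ^ β) :=
    ((locallyIntegrable_abs_rpow hβ).integrableOn_isCompact isCompact_Icc).integrable_indicator
      measurableSet_Icc
  refine ((hnear.const_mul M).add (hw.const_mul 2)).mono'
    (hf.mul (by fun_prop : Measurable fun x : ℝ => ((|x| ^ β : ℝ) : ℂ)).aestronglyMeasurable)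
    (ae_of_all _ fun x => ?_)
  have hk : 0 ≤ |x| ^ β := rpow_nonneg (abs_nonneg x) β
  have hfar : 0 ≤ 2 * (‖f x‖ / (1 + |x| ^ (-β))) := by positivity
  rw [Pi.add_apply, norm_mul, Complex.norm_real, norm_eq_abs, abs_of_nonneg hk]
  by_cases hx : x ∈ Set.Icc (-1 : ℝ) 1
  · rw [Set.indicator_of_mem hx]
    nlinarith [hM x]
  · have hx1 : 1 ≤ |x| := by
      rw [Set.mem_Icc, ← abs_le, not_le] at hx
      exact hx.le
    have hprod : |x| ^ β * (1 + |x| ^ (-β)) ≤ 2 := by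
      rw [mul_add, mul_one, rpow_neg (abs_nonneg x),
        mul_inv_cancel₀ (rpow_pos_of_pos (by linarith) β).ne']
      linarith [rpow_le_one_of_one_le_of_nonpos hx1 hβ0]
    rw [Set.indicator_of_notMem hx, mul_zero, zero_add, ← mul_div_assoc,
      le_div_iff₀ (by positivity)]
    nlinarith [norm_nonneg (f x)]

lemma integrable_mul_abs_sub_rpow (hβ : -1 < β) (hβ0 : β < 0) (hf : AEStronglyMeasurable f)
    (hM : ∀ x, ‖f x‖ ≤ M) (hw : Integrable (fun x : ℝ => ‖f x‖ / (1 + |x| ^ (-β)))) (t : ℝ) :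
    Integrable (fun x : ℝ => f x * ((|t - x| ^ β : ℝ) : ℂ)) := by
  have hk : Integrable (fun x : ℝ => ((|t - x| ^ β - |x| ^ β : ℝ) : ℂ)) := by
    have h := (integrable_abs_sub_rpow_sub_rpow hβ hβ0 t 0).ofReal (𝕜 := ℂ)
    simp only [zero_sub, abs_neg] at h
    exact h
  refine ((integrable_mul_abs_rpow hβ hβ0.le hf hM hw).add (hk.bdd_mul hf (ae_of_all _ hM))).congr
    (ae_of_all _ fun x => ?_)
  simp only [Pi.add_apply]
  push_cast
  ring

end Potential

lemma norm_integral_mul_sub_integral_mul_le {f : ℝ → ℂ} {k₁ k₂ : ℝ → ℝ} {S : ℝ}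
    (hS : ∀ x, ‖f x‖ ≤ S) (h₁ : Integrable (fun x => f x * (k₁ x : ℂ)))
    (h₂ : Integrable (fun x => f x * (k₂ x : ℂ))) (hk : Integrable (fun x => k₁ x - k₂ x)) :
    ‖(∫ x, f x * (k₁ x : ℂ)) - ∫ x, f x * (k₂ x : ℂ)‖ ≤ S * ∫ x, |k₁ x - k₂ x| := by
  rw [← integral_sub h₁ h₂, ← integral_const_mul]
  refine norm_integral_le_of_norm_le (hk.abs.const_mul S) (ae_of_all _ fun x => ?_)
  rw [← mul_sub, ← Complex.ofReal_sub, norm_mul, Complex.norm_real, norm_eq_abs]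
  exact mul_le_mul_of_nonneg_right (hS x) (abs_nonneg _)

end RieszPotential

open RieszPotential

/-- For α ∈ (0,1) and a bounded measurable f : ℝ → ℂ with
∫ |f(x)|/(1+|x|^{1−α}) dx < ∞, the Riesz potential (U_α f)(t) = ∫ f(x)·|t−x|^{α−1} dx
converges absolutely at every t, and there is C depending only on α with
|(U_α f)(s) − (U_α f)(t)| ≤ C·(sup |f|)·|s−t|^α; in particular U_α f is Hölder with
exponent α. -/
theorem statement19 (α : ℝ) (hα : α ∈ Set.Ioo (0 : ℝ) 1) :
    ∃ C : ℝ, ∀ f : ℝ → ℂ, Measurable f → (∃ M : ℝ, ∀ x, ‖f x‖ ≤ M) →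
      Integrable (fun x : ℝ => ‖f x‖ / (1 + |x| ^ (1 - α))) →
      (∀ t : ℝ, Integrable (fun x : ℝ => f x * ((|t - x| ^ (α - 1) : ℝ) : ℂ))) ∧
      (∀ s t : ℝ,
        ‖(∫ x : ℝ, f x * ((|s - x| ^ (α - 1) : ℝ) : ℂ)) -
            ∫ x : ℝ, f x * ((|t - x| ^ (α - 1) : ℝ) : ℂ)‖
          ≤ C * (⨆ x : ℝ, ‖f x‖) * |s - t| ^ α) := by
  obtain ⟨hα0, hα1⟩ := hα
  refine ⟨∫ y : ℝ, |(|1 - y| ^ (α - 1) - |y| ^ (α - 1))|, fun f hf ⟨M, hM⟩ hw => ?_⟩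
  have hw' : Integrable (fun x : ℝ => ‖f x‖ / (1 + |x| ^ (-(α - 1)))) := by
    simpa only [neg_sub] using hw
  have hU := integrable_mul_abs_sub_rpow (by linarith) (by linarith) hf.aestronglyMeasurable hM hw'
  refine ⟨hU, fun s t => ?_⟩
  have hS : ∀ x, ‖f x‖ ≤ ⨆ x, ‖f x‖ := le_ciSup ⟨M, Set.forall_mem_range.2 hM⟩
  calc _ ≤ (⨆ x, ‖f x‖) * ∫ x : ℝ, |(|s - x| ^ (α - 1) - |t - x| ^ (α - 1))| :=
        norm_integral_mul_sub_integral_mul_le hS (hU s) (hU t)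
          (integrable_abs_sub_rpow_sub_rpow (by linarith) (by linarith) s t)
    _ = _ := by
        rw [integral_abs_sub_rpow_sub_rpow (by linarith) s t, sub_add_cancel]
        ring
end
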